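/- arXiv:1706.07456 — 11 statements merged into one kernel-verified Lean document; each statement's English description precedes it below -/
import Mathlib

section
/- Let h : ℂ → ℂ be C^∞-smooth on a neighborhood of 0 with h(0) ≠ 0, and define ψ(z) := z·h(z). Then the map Ψ : ℂ × ℂ → ℂ × ℂ defined by Ψ(u,v) := (u, v·h(u·v)) is C^∞-smooth on a neighborhood of (0,0), satisfies Ψ(0,0) = (0,0), has invertible real Fréchet derivative at (0,0), and satisfies that the product of the two components of Ψ(u,v) equals ψ(u·v) for all (u,v) in a neighborhood of (0,0). In particular, ψ is liftable. -/
/-!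
`Ψ(u,v) = (u, v·h(uv))` satisfies `u · (v·h(uv)) = (uv)·h(uv)` by associativity alone, and its
derivative at the origin is `(du, dv) ↦ (du, dv · h 0)`, which is invertible since
`h 0` is a unit.
-/

open Complex Filter Topology

/-- A map `ψ : ℂ → ℂ`, smooth near `0` with `ψ 0 = 0`, is *liftable* if there is a
map `Ψ : ℂ × ℂ → ℂ × ℂ`, smooth near `(0,0)`, with `Ψ (0,0) = (0,0)`, invertible real
Fréchet derivative at `(0,0)`, such that near `(0,0)` the product of the two
components of `Ψ (u,v)` equals `ψ (u·v)`. -/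
def Liftable (ψ : ℂ → ℂ) : Prop :=
  ∃ Ψ : ℂ × ℂ → ℂ × ℂ,
    ContDiffAt ℝ (⊤ : ℕ∞) Ψ 0 ∧ Ψ 0 = 0 ∧ IsUnit (fderiv ℝ Ψ 0) ∧
    ∀ᶠ p : ℂ × ℂ in 𝓝 0, (Ψ p).1 * (Ψ p).2 = ψ (p.1 * p.2)

section LiftMap

variable {𝕜 𝔸 : Type*} [NontriviallyNormedField 𝕜] [NormedRing 𝔸] [NormedAlgebra 𝕜 𝔸]

def liftMap (h : 𝔸 → 𝔸) (p : 𝔸 × 𝔸) : 𝔸 × 𝔸 := (p.1, p.2 * h (p.1 * p.2))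

@[simp]
theorem liftMap_zero (h : 𝔸 → 𝔸) : liftMap h 0 = 0 := by
  simp [liftMap]

theorem liftMap_fst_mul_snd (h : 𝔸 → 𝔸) (p : 𝔸 × 𝔸) :
    (liftMap h p).1 * (liftMap h p).2 = p.1 * p.2 * h (p.1 * p.2) :=
  (mul_assoc _ _ _).symm

theorem contDiffAt_liftMap {h : 𝔸 → 𝔸} {n : WithTop ℕ∞} (hh : ContDiffAt 𝕜 n h 0) :
    ContDiffAt 𝕜 n (liftMap h) 0 := by
  have hmul : ContDiffAt 𝕜 n (fun p : 𝔸 × 𝔸 => p.1 * p.2) 0 :=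
    (contDiff_fst.mul contDiff_snd).contDiffAt
  have hcomp : ContDiffAt 𝕜 n (fun p : 𝔸 × 𝔸 => h (p.1 * p.2)) 0 :=
    ContDiffAt.comp (0 : 𝔸 × 𝔸) (by simpa using hh) hmul
  exact contDiffAt_fst.prodMk (contDiffAt_snd.mul hcomp)

def liftMapDeriv (c : 𝔸) : 𝔸 × 𝔸 →L[𝕜] 𝔸 × 𝔸 :=
  (ContinuousLinearMap.fst 𝕜 𝔸 𝔸).prod ((ContinuousLinearMap.snd 𝕜 𝔸 𝔸).smulRight c)

theorem hasFDerivAt_liftMap {h : 𝔸 → 𝔸} (hh : DifferentiableAt 𝕜 h 0) :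
    HasFDerivAt (liftMap h) (liftMapDeriv (𝕜 := 𝕜) (h 0)) 0 := by
  have hcomp : HasFDerivAt (fun p : 𝔸 × 𝔸 => h (p.1 * p.2))
      (fderiv 𝕜 (fun p : 𝔸 × 𝔸 => h (p.1 * p.2)) 0) 0 :=
    (DifferentiableAt.comp (0 : 𝔸 × 𝔸) (by simpa using hh)
      (differentiableAt_fst.mul differentiableAt_snd)).hasFDerivAt
  -- the term `v · d(h(uv))` of the product rule vanishes because `v = 0` at the origin
  refine (hasFDerivAt_fst.prodMk (hasFDerivAt_snd.mul' hcomp)).congr_fderiv ?_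
  ext p <;> simp [liftMapDeriv]

theorem isUnit_liftMapDeriv {c : 𝔸} (hc : IsUnit c) : IsUnit (liftMapDeriv (𝕜 := 𝕜) c) := by
  obtain ⟨u, rfl⟩ := hc
  refine ⟨⟨liftMapDeriv (u : 𝔸), liftMapDeriv (↑u⁻¹ : 𝔸), ?_, ?_⟩, rfl⟩ <;>
    ext p <;> simp [liftMapDeriv, mul_assoc]

theorem isUnit_fderiv_liftMap {h : 𝔸 → 𝔸} (hh : DifferentiableAt 𝕜 h 0) (h0 : IsUnit (h 0)) :
    IsUnit (fderiv 𝕜 (liftMap h) 0) := by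
  rw [(hasFDerivAt_liftMap hh).fderiv]
  exact isUnit_liftMapDeriv h0

end LiftMap

/-- If `h` is smooth near `0` with `h 0 ≠ 0` and `ψ z = z·h z`, then
`Ψ (u,v) = (u, v·h (u·v))` is smooth near `(0,0)`, fixes the origin, has invertible
real Fréchet derivative there, and lifts `ψ` through `(u,v) ↦ u·v`.
In particular `ψ` is liftable. -/
theorem statement1 (h : ℂ → ℂ) (hsm : ContDiffAt ℝ (⊤ : ℕ∞) h 0) (h0 : h 0 ≠ 0)
    (ψ : ℂ → ℂ) (hψ : ∀ z, ψ z = z * h z)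
    (Ψ : ℂ × ℂ → ℂ × ℂ) (hΨ : ∀ u v : ℂ, Ψ (u, v) = (u, v * h (u * v))) :
    ContDiffAt ℝ (⊤ : ℕ∞) Ψ 0 ∧ Ψ 0 = 0 ∧ IsUnit (fderiv ℝ Ψ 0) ∧
    (∀ᶠ p : ℂ × ℂ in 𝓝 0, (Ψ p).1 * (Ψ p).2 = ψ (p.1 * p.2)) ∧
    Liftable ψ := by
  obtain rfl : Ψ = liftMap h := funext fun p => hΨ p.1 p.2
  obtain rfl : ψ = fun z => z * h z := funext hψ
  have hsmooth := contDiffAt_liftMap hsm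
  have hunit := isUnit_fderiv_liftMap (hsm.differentiableAt (by simp)) h0.isUnit
  have hlift : ∀ᶠ p : ℂ × ℂ in 𝓝 0,
      (liftMap h p).1 * (liftMap h p).2 = p.1 * p.2 * h (p.1 * p.2) :=
    .of_forall (liftMap_fst_mul_snd h)
  exact ⟨hsmooth, liftMap_zero h, hunit, hlift, liftMap h, hsmooth, liftMap_zero h, hunit, hlift⟩
end

section
/- Let ψ be a formal power series in two variables z, w over ℂ with zero constant coefficient, and let a be the coefficient of z in ψ and b the coefficient of w in ψ, with |a| > |b|. Let f and g be formal power series in four variables x₀, x₁, x₂, x₃ over ℂ, each with zero constant coefficient. If the power series obtained from ψ by substituting z := x₀·x₂ and w := x₁·x₃ equals the product f·g in ℂ[[x₀, x₁, x₂, x₃]], then ψ is divisible by z; equivalently, for every k ≥ 0 the coefficient of the monomial w^k in ψ is zero. -/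
/-- The formal power series in four variables `x₀, x₁, x₂, x₃` obtained from a
formal power series `ψ` in two variables `z, w` by substituting `z := x₀·x₂` and
`w := x₁·x₃`: the monomial `z^j·w^k` becomes `x₀^j·x₁^k·x₂^j·x₃^k`, so the
coefficient of the substituted series at an exponent `d` with `d 0 = d 2` and
`d 1 = d 3` equals the coefficient of `ψ` at `z^(d 0)·w^(d 1)`, and all other
coefficients vanish. -/
noncomputable def substZW (ψ : MvPowerSeries (Fin 2) ℂ) : MvPowerSeries (Fin 4) ℂ :=
  fun d : Fin 4 →₀ ℕ =>
    if d 0 = d 2 ∧ d 1 = d 3 then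
      MvPowerSeries.coeff (Finsupp.single 0 (d 0) + Finsupp.single 1 (d 1)) ψ
    else 0

/-!
Write `αₖ`, `βₖ` for the coefficients of `xₖ` in `f`, `g`. Every monomial of `f·g` has equal
`x₀`- and `x₂`-exponents, and its `x₀x₂`-coefficient is `α₀β₂ + α₂β₀ = a ≠ 0`; up to swapping
`f` and `g`, `α₀β₂ ≠ 0`. The vanishing `x₀²`-, `x₀x₁`- and `x₀x₃`-coefficients then force the
linear part of `g` to be `β₂x₂`. Modulo `x₀`, the lowest-degree part of `f` times `β₂x₂` would
be a nonzero part of `f·g` containing `x₂` but not `x₀`, so `x₀ ∣ f`. Hence `x₀ ∣ f·g`, and the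
coefficient of `x₁ᵏx₃ᵏ` in `f·g`, which is the coefficient of `wᵏ` in `ψ`, vanishes.
-/

open MvPowerSeries Finsupp Finset.HasAntidiagonal

namespace Finsupp

variable {σ : Type*}

theorem eq_of_add_eq_single_one_add_single_one {i k : σ} {u v : σ →₀ ℕ} (hu : u ≠ 0) (hv : v ≠ 0)
    (h : u + v = single i 1 + single k 1) :
    (u = single i 1 ∧ v = single k 1) ∨ (u = single k 1 ∧ v = single i 1) := by
  have hdeg : degree u + degree v = 2 := by
    rw [← map_add, h, map_add, degree_single, degree_single]
  have hu' := (degree_eq_zero_iff u).not.2 hu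
  have hv' := (degree_eq_zero_iff v).not.2 hv
  obtain ⟨l, rfl⟩ := range_single_one.ge (show degree u = 1 by omega)
  obtain ⟨m, rfl⟩ := range_single_one.ge (show degree v = 1 by omega)
  rcases (single_add_single_eq_single_add_single one_ne_zero one_ne_zero).1 h with
    ⟨rfl, rfl⟩ | ⟨-, rfl, rfl⟩ | ⟨h, -, -⟩
  · exact .inl ⟨rfl, rfl⟩
  · exact .inr ⟨rfl, rfl⟩
  · exact absurd h (by norm_num)

end Finsupp

namespace MvPowerSeries

variable {σ R : Type*} [Semiring R] {f g : MvPowerSeries σ R}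

section Quadratic

variable (hf : constantCoeff f = 0) (hg : constantCoeff g = 0)
include hf hg

theorem coeff_mul_coeff_eq_zero_of_mem_antidiagonal_single_add_single [DecidableEq σ] {i k : σ}
    {p : (σ →₀ ℕ) × (σ →₀ ℕ)} (hp : p ∈ antidiagonal (single i 1 + single k 1))
    (hik : p ≠ (single i 1, single k 1)) (hki : p ≠ (single k 1, single i 1)) :
    coeff p.1 f * coeff p.2 g = 0 := by
  obtain ⟨u, v⟩ := p
  by_cases hu : u = 0
  · rw [hu, coeff_zero_eq_constantCoeff_apply, hf, zero_mul]
  by_cases hv : v = 0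
  · rw [hv, coeff_zero_eq_constantCoeff_apply, hg, mul_zero]
  rcases eq_of_add_eq_single_one_add_single_one hu hv (mem_antidiagonal.1 hp) with
    ⟨rfl, rfl⟩ | ⟨rfl, rfl⟩
  · exact absurd rfl hik
  · exact absurd rfl hki

theorem coeff_single_add_single_mul {i k : σ} (hik : i ≠ k) :
    coeff (single i 1 + single k 1) (f * g) =
      coeff (single i 1) f * coeff (single k 1) g +
        coeff (single k 1) f * coeff (single i 1) g := by
  classical
  rw [coeff_mul]
  refine Finset.sum_eq_add_of_mem (single i 1, single k 1) (single k 1, single i 1)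
    (mem_antidiagonal.2 rfl) (mem_antidiagonal.2 (add_comm _ _)) ?_
    fun p hp hne ↦
      coeff_mul_coeff_eq_zero_of_mem_antidiagonal_single_add_single hf hg hp hne.1 hne.2
  exact fun h ↦ hik (single_left_injective one_ne_zero (congrArg Prod.fst h))

theorem coeff_single_two_mul (i : σ) :
    coeff (single i 2) (f * g) = coeff (single i 1) f * coeff (single i 1) g := by
  classical
  rw [show (2 : ℕ) = 1 + 1 from rfl, single_add, coeff_mul]
  exact Finset.sum_eq_single_of_mem (single i 1, single i 1) (mem_antidiagonal.2 rfl)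
    fun p hp hne ↦ coeff_mul_coeff_eq_zero_of_mem_antidiagonal_single_add_single hf hg hp hne hne

end Quadratic

variable [NoZeroDivisors R] {i j : σ}

theorem X_dvd_left_of_coeff_mul_eq_zero (hij : i ≠ j) (hg0 : constantCoeff g = 0)
    (hg : ∀ k ≠ j, coeff (single k 1) g = 0) (hgj : coeff (single j 1) g ≠ 0)
    (hfg : ∀ d : σ →₀ ℕ, d i = 0 → d j ≠ 0 → coeff d (f * g) = 0) :
    X i ∣ f := by
  classical
  rw [X_dvd_iff]
  suffices ∀ n, ∀ e : σ →₀ ℕ, degree e = n → e i = 0 → coeff e f = 0 from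
    fun e ↦ this _ e rfl
  intro n
  induction n using Nat.strong_induction_on with
  | _ n ih =>
  rintro e rfl hei
  -- Only `(e, xⱼ)` survives: the other `v` of degree `≤ 1` carry no coefficient of `g`, and
  -- for `degree v ≥ 2` the factor `u` has smaller degree, so the induction hypothesis applies.
  have hsum : coeff (e + single j 1) (f * g) = coeff e f * coeff (single j 1) g := by
    rw [coeff_mul]
    refine Finset.sum_eq_single_of_mem (e, single j 1) (mem_antidiagonal.2 rfl) ?_
    rintro ⟨u, v⟩ huv hne
    simp only [mem_antidiagonal] at huv
    rcases (by omega : degree v = 0 ∨ degree v = 1 ∨ 2 ≤ degree v) with h | h | h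
    · rw [(degree_eq_zero_iff v).1 h, coeff_zero_eq_constantCoeff_apply, hg0, mul_zero]
    · obtain ⟨l, rfl⟩ := range_single_one.ge h
      have hlj : l ≠ j := by
        rintro rfl
        exact hne (by rw [add_right_cancel huv])
      rw [hg l hlj, mul_zero]
    · have hui : u i = 0 := by
        have := DFunLike.congr_fun huv i
        simp only [Finsupp.add_apply, hei, single_eq_of_ne hij] at this
        omega
      have hdeg : degree u + degree v = degree e + 1 := by
        rw [← map_add, huv, map_add, degree_single]
      rw [ih (degree u) (by omega) u rfl hui, zero_mul]
  have := hfg (e + single j 1) (by simp [hei, single_eq_of_ne hij]) (by simp)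
  exact (mul_eq_zero.1 (hsum ▸ this)).resolve_right hgj

theorem X_dvd_left_of_coeff_mul_eq_zero_of_apply_ne (hij : i ≠ j) (hf0 : constantCoeff f = 0)
    (hg0 : constantCoeff g = 0) (hfg : ∀ d : σ →₀ ℕ, d i ≠ d j → coeff d (f * g) = 0)
    (hfi : coeff (single i 1) f ≠ 0) (hgj : coeff (single j 1) g ≠ 0) :
    X i ∣ f := by
  have hgi : coeff (single i 1) g = 0 := by
    have := hfg (single i 2) (by simp [single_eq_of_ne' hij])
    rw [coeff_single_two_mul hf0 hg0] at this
    exact (mul_eq_zero.1 this).resolve_left hfi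
  refine X_dvd_left_of_coeff_mul_eq_zero hij hg0 (fun k hkj ↦ ?_) hgj
    fun d hdi hdj ↦ hfg d (by omega)
  obtain rfl | hki := eq_or_ne k i
  · exact hgi
  have := hfg (single i 1 + single k 1)
    (by simp [single_eq_of_ne' hij, single_eq_of_ne' hki, single_eq_of_ne' hkj])
  rw [coeff_single_add_single_mul hf0 hg0 hki.symm, hgi, mul_zero, add_zero] at this
  exact (mul_eq_zero.1 this).resolve_left hfi

end MvPowerSeries

theorem coeff_substZW_eq_zero {ψ : MvPowerSeries (Fin 2) ℂ} {d : Fin 4 →₀ ℕ} (hd : d 0 ≠ d 2) :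
    coeff d (substZW ψ) = 0 :=
  if_neg fun h ↦ hd h.1

theorem coeff_substZW (ψ : MvPowerSeries (Fin 2) ℂ) (j k : ℕ) :
    coeff (single 0 j + single 1 k + single 2 j + single 3 k) (substZW ψ) =
      coeff (single 0 j + single 1 k) ψ := by
  simp [coeff_apply, substZW]

theorem statement2_general (ψ : MvPowerSeries (Fin 2) ℂ)
    (a b : ℂ)
    (ha : a = MvPowerSeries.coeff (Finsupp.single 0 1) ψ)
    (hab : ‖b‖ < ‖a‖)
    (f g : MvPowerSeries (Fin 4) ℂ)
    (hf0 : MvPowerSeries.constantCoeff f = 0)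
    (hg0 : MvPowerSeries.constantCoeff g = 0)
    (heq : substZW ψ = f * g) :
    (MvPowerSeries.X 0 : MvPowerSeries (Fin 2) ℂ) ∣ ψ ∧
      ∀ k : ℕ, MvPowerSeries.coeff (Finsupp.single 1 k) ψ = 0 := by
  have hfg (d : Fin 4 →₀ ℕ) (hd : d 0 ≠ d 2) : coeff d (f * g) = 0 :=
    heq ▸ coeff_substZW_eq_zero hd
  have ha' : coeff (single 0 1) f * coeff (single 2 1) g +
      coeff (single 2 1) f * coeff (single 0 1) g = a := by
    rw [← coeff_single_add_single_mul hf0 hg0 (by decide), ← heq, ha]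
    simpa using coeff_substZW ψ 1 0
  have hX : X 0 ∣ f * g := by
    by_cases h : coeff (single 0 1) f * coeff (single 2 1) g = 0
    · rw [h, zero_add] at ha'
      obtain ⟨h2, h0⟩ := mul_ne_zero_iff.1 (ha' ▸ norm_pos_iff.1 ((norm_nonneg b).trans_lt hab))
      exact (X_dvd_left_of_coeff_mul_eq_zero_of_apply_ne (by decide) hg0 hf0
        (fun d hd ↦ mul_comm f g ▸ hfg d hd) h0 h2).mul_left f
    · obtain ⟨h0, h2⟩ := mul_ne_zero_iff.1 h
      exact (X_dvd_left_of_coeff_mul_eq_zero_of_apply_ne (by decide) hf0 hg0 hfg h0 h2).mul_right g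
  have hw (k : ℕ) : coeff (single 1 k) ψ = 0 := by
    have h := coeff_substZW ψ 0 k
    simp only [single_zero, zero_add, add_zero] at h
    rw [← h, heq]
    exact X_dvd_iff.1 hX _ (by simp)
  refine ⟨X_dvd_iff.2 fun m hm ↦ ?_, hw⟩
  rw [show m = single 1 (m 1) by ext i; fin_cases i <;> simp [hm]]
  exact hw _

/-- If `ψ ∈ ℂ[[z,w]]` has zero constant term, its coefficient `a` of `z` dominates
its coefficient `b` of `w` in absolute value, and the series obtained from `ψ` by
substituting `z := x₀·x₂`, `w := x₁·x₃` factors as a product `f·g` of two power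
series with zero constant term, then `ψ` is divisible by `z`; equivalently, the
coefficient of `w^k` in `ψ` vanishes for every `k`. -/
theorem statement2 (ψ : MvPowerSeries (Fin 2) ℂ)
    (hψ0 : MvPowerSeries.constantCoeff ψ = 0)
    (a b : ℂ)
    (ha : a = MvPowerSeries.coeff (Finsupp.single 0 1) ψ)
    (hb : b = MvPowerSeries.coeff (Finsupp.single 1 1) ψ)
    (hab : ‖b‖ < ‖a‖)
    (f g : MvPowerSeries (Fin 4) ℂ)
    (hf0 : MvPowerSeries.constantCoeff f = 0)
    (hg0 : MvPowerSeries.constantCoeff g = 0)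
    (heq : substZW ψ = f * g) :
    (MvPowerSeries.X 0 : MvPowerSeries (Fin 2) ℂ) ∣ ψ ∧
      ∀ k : ℕ, MvPowerSeries.coeff (Finsupp.single 1 k) ψ = 0 :=
  statement2_general ψ a b ha hab f g hf0 hg0 heq
end

section
/- Let n ≥ 2 and let μ₁, …, μ_{n−1} ∈ ℂ and μ'₁, …, μ'_{n−1} ∈ ℂ satisfy |μᵢ| < 1 and |μ'ᵢ| < 1 for all i. Let c₀, c₁, …, c_{n−1} be nonzero complex numbers, and suppose that either ψⱼ(z) = cⱼ·z for every j = 0, …, n−1, or ψⱼ(z) = cⱼ·conj(z) for every j = 0, …, n−1. If for every i ∈ {1, …, n−1} and every z ∈ ℂ one has ψᵢ(z) + μ'ᵢ·conj(ψᵢ(z)) = ψ₀(z + μᵢ·conj(z)), then there exists c ∈ ℂ with |c| = 1 such that either μ'ᵢ = c·μᵢ for all i, or μ'ᵢ = c·conj(μᵢ) for all i. -/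
/-! Both sides of each hypothesis are real-linear maps `z ↦ a z + b z̄`, and such a map
determines its coefficients `a, b`. Comparing them gives `cᵢ = c₀` and `μ'ᵢ c̄₀ = c₀ μᵢ`
(resp. `= c₀ μ̄ᵢ` in the antilinear case), so `c = c₀ / c̄₀` works for every `i`. -/

open ComplexConjugate

namespace Complex

theorem eq_and_eq_of_mul_add_mul_conj {a b a' b' : ℂ}
    (h : ∀ z, a * z + b * conj z = a' * z + b' * conj z) : a = a' ∧ b = b' := by
  have h₁ := h 1
  have hI := h I
  simp only [map_one, mul_one, conj_I] at h₁ hI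
  have hI' : a - b = a' - b' := mul_left_cancel₀ I_ne_zero (by linear_combination hI)
  exact ⟨by linear_combination (h₁ + hI') / 2, by linear_combination (h₁ - hI') / 2⟩

theorem norm_div_conj_self {c : ℂ} (hc : c ≠ 0) : ‖c / conj c‖ = 1 := by
  rw [norm_div, norm_conj, div_self (norm_ne_zero_iff.mpr hc)]

theorem eq_div_conj_mul_of_mul_conj_eq {c μ μ' : ℂ} (hc : c ≠ 0) (h : μ' * conj c = c * μ) :
    μ' = c / conj c * μ := by
  rw [div_mul_eq_mul_div, eq_div_iff ((map_ne_zero _).mpr hc), h]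

theorem eq_div_conj_mul_of_linear {c₀ c μ μ' : ℂ} (hc₀ : c₀ ≠ 0)
    (h : ∀ z, c * z + μ' * conj (c * z) = c₀ * (z + μ * conj z)) :
    μ' = c₀ / conj c₀ * μ := by
  obtain ⟨hc, hμ'⟩ := eq_and_eq_of_mul_add_mul_conj (a := c) (b := μ' * conj c)
    (a' := c₀) (b' := c₀ * μ) fun z => by
      have := h z
      rw [map_mul] at this
      linear_combination this
  rw [hc] at hμ'
  exact eq_div_conj_mul_of_mul_conj_eq hc₀ hμ'

theorem eq_div_conj_mul_conj_of_antilinear {c₀ c μ μ' : ℂ} (hc₀ : c₀ ≠ 0)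
    (h : ∀ z, c * conj z + μ' * conj (c * conj z) = c₀ * conj (z + μ * conj z)) :
    μ' = c₀ / conj c₀ * conj μ := by
  obtain ⟨hμ', hc⟩ := eq_and_eq_of_mul_add_mul_conj (a := μ' * conj c) (b := c)
    (a' := c₀ * conj μ) (b' := c₀) fun z => by
      have := h z
      simp only [map_mul, map_add, conj_conj] at this
      linear_combination this
  rw [hc] at hμ'
  exact eq_div_conj_mul_of_mul_conj_eq hc₀ hμ'

end Complex

theorem statement4_general (n : ℕ) (μ μ' : ℕ → ℂ)
    (c : ℕ → ℂ) (hc : ∀ j, j ≤ n - 1 → c j ≠ 0)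
    (ψ : ℕ → ℂ → ℂ)
    (hψ : (∀ j, j ≤ n - 1 → ∀ z, ψ j z = c j * z) ∨
          (∀ j, j ≤ n - 1 → ∀ z, ψ j z = c j * (starRingEnd ℂ) z))
    (heq : ∀ i, 1 ≤ i → i ≤ n - 1 → ∀ z : ℂ,
      ψ i z + μ' i * (starRingEnd ℂ) (ψ i z) = ψ 0 (z + μ i * (starRingEnd ℂ) z)) :
    ∃ c₀ : ℂ, ‖c₀‖ = 1 ∧
      ((∀ i, 1 ≤ i → i ≤ n - 1 → μ' i = c₀ * μ i) ∨
       (∀ i, 1 ≤ i → i ≤ n - 1 → μ' i = c₀ * (starRingEnd ℂ) (μ i))) := by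
  have hc₀ : c 0 ≠ 0 := hc 0 (Nat.zero_le _)
  refine ⟨c 0 / conj (c 0), Complex.norm_div_conj_self hc₀, ?_⟩
  rcases hψ with hψ | hψ
  · refine .inl fun i hi₁ hi₂ =>
      Complex.eq_div_conj_mul_of_linear (c := c i) hc₀ fun z => ?_
    simpa only [hψ i hi₂, hψ 0 (Nat.zero_le _)] using heq i hi₁ hi₂ z
  · refine .inr fun i hi₁ hi₂ =>
      Complex.eq_div_conj_mul_conj_of_antilinear (c := c i) hc₀ fun z => ?_
    simpa only [hψ i hi₂, hψ 0 (Nat.zero_le _)] using heq i hi₁ hi₂ z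

/-- Uniqueness of the normal form of `1`-jets of gluing maps of an `n`-pinched
focus-focus singularity: if a tuple of liftable `1`-jets `ψⱼ` (all complex-linear
`z ↦ cⱼ·z`, or all antilinear `z ↦ cⱼ·conj z`) transforms the tuple of normal forms
`z + μᵢ·conj z` into the tuple `z + μ'ᵢ·conj z` (i.e. `ψᵢ` followed by the second
normal form equals the first normal form followed by `ψ₀`), then there is `c` of
absolute value `1` with `μ'ᵢ = c·μᵢ` for all `i`, or `μ'ᵢ = c·conj μᵢ` for all `i`. -/
theorem statement4 (n : ℕ) (hn : 2 ≤ n) (μ μ' : ℕ → ℂ)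
    (hμ : ∀ i, 1 ≤ i → i ≤ n - 1 → ‖μ i‖ < 1)
    (hμ' : ∀ i, 1 ≤ i → i ≤ n - 1 → ‖μ' i‖ < 1)
    (c : ℕ → ℂ) (hc : ∀ j, j ≤ n - 1 → c j ≠ 0)
    (ψ : ℕ → ℂ → ℂ)
    (hψ : (∀ j, j ≤ n - 1 → ∀ z, ψ j z = c j * z) ∨
          (∀ j, j ≤ n - 1 → ∀ z, ψ j z = c j * (starRingEnd ℂ) z))
    (heq : ∀ i, 1 ≤ i → i ≤ n - 1 → ∀ z : ℂ,
      ψ i z + μ' i * (starRingEnd ℂ) (ψ i z) = ψ 0 (z + μ i * (starRingEnd ℂ) z)) :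
    ∃ c₀ : ℂ, ‖c₀‖ = 1 ∧
      ((∀ i, 1 ≤ i → i ≤ n - 1 → μ' i = c₀ * μ i) ∨
       (∀ i, 1 ≤ i → i ≤ n - 1 → μ' i = c₀ * (starRingEnd ℂ) (μ i))) :=
  statement4_general n μ μ' c hc ψ hψ heq
end

section
/- Let n ≥ 2 and let aᵢ, bᵢ, a'ᵢ, b'ᵢ ∈ ℂ (for i = 1, …, n−1) satisfy |aᵢ| > |bᵢ| and |a'ᵢ| > |b'ᵢ|. Set μᵢ := bᵢ / conj(aᵢ) and μ'ᵢ := b'ᵢ / conj(a'ᵢ). Then the following are equivalent: (1) there exist nonzero complex numbers c₀, …, c_{n−1} and maps ψⱼ : ℂ → ℂ with either ψⱼ(z) = cⱼ·z for every j, or ψⱼ(z) = cⱼ·conj(z) for every j, such that for every i ∈ {1, …, n−1} and every z ∈ ℂ: a'ᵢ·ψᵢ(z) + b'ᵢ·conj(ψᵢ(z)) = ψ₀(aᵢ·z + bᵢ·conj(z)); (2) there exists c ∈ ℂ with |c| = 1 such that either μ'ᵢ = c·μᵢ for all i, or μ'ᵢ = c·conj(μᵢ) for all i. -/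
/-!
Writing `ψⱼ z = cⱼ z` (resp. `cⱼ conj z`) and comparing the coefficients of `z` and `conj z`
on both sides of the orbit relation, each index `i` imposes exactly `a'ᵢ cᵢ = c₀ aᵢ` and
`b'ᵢ conj cᵢ = c₀ bᵢ` (with `aᵢ, bᵢ` conjugated in the antilinear case). The first equation
fixes `cᵢ`, and the second then says `μ'ᵢ = (c₀ / conj c₀) μᵢ`. Conversely every unimodular `u`
is of the form `c₀ / conj c₀`, taking for `c₀` a square root of `u`.
-/

open ComplexConjugate

namespace Complex

theorem forall_mul_add_mul_conj_eq_iff {p q p' q' : ℂ} :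
    (∀ z, p * z + q * conj z = p' * z + q' * conj z) ↔ p = p' ∧ q = q' := by
  refine ⟨fun h => ?_, fun ⟨hp, hq⟩ _ => by rw [hp, hq]⟩
  have h₁ := h 1
  have h_I := h I
  simp only [map_one, mul_one, conj_I] at h₁ h_I
  constructor
  · linear_combination (h₁ - I * h_I) / 2 + (p - q - p' + q') / 2 * I_sq
  · linear_combination (h₁ + I * h_I) / 2 + (q - p - q' + p') / 2 * I_sq

theorem exists_div_conj_eq_of_norm_eq_one {u : ℂ} (hu : ‖u‖ = 1) :
    ∃ d : ℂ, d ≠ 0 ∧ d / conj d = u := by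
  obtain ⟨d, hd⟩ := IsAlgClosed.exists_pow_nat_eq u (n := 2) two_pos
  have hd_norm : ‖d‖ = 1 := by
    rw [← pow_left_inj₀ (norm_nonneg d) zero_le_one two_ne_zero, ← norm_pow, hd, hu, one_pow]
  have hd_conj : d * conj d = 1 := by rw [mul_conj, normSq_eq_norm_sq, hd_norm]; norm_num
  have hd0 : d ≠ 0 := left_ne_zero_of_mul_eq_one hd_conj
  refine ⟨d, hd0, ?_⟩
  rw [div_eq_iff (right_ne_zero_of_mul_eq_one hd_conj), ← hd]
  linear_combination (-d) * hd_conj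

end Complex

open Complex

section Jets

variable {a b a' b' c₀ c : ℂ}

theorem linear_jet_eq_iff :
    (∀ z, a' * (c * z) + b' * conj (c * z) = c₀ * (a * z + b * conj z)) ↔
      a' * c = c₀ * a ∧ b' * conj c = c₀ * b := by
  rw [← forall_mul_add_mul_conj_eq_iff]
  refine forall_congr' fun z => ?_
  rw [map_mul]
  constructor <;> intro h <;> linear_combination h

theorem antilinear_jet_eq_iff :
    (∀ z, a' * (c * conj z) + b' * conj (c * conj z) = c₀ * conj (a * z + b * conj z)) ↔
      a' * c = c₀ * conj a ∧ b' * conj c = c₀ * conj b := by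
  rw [← linear_jet_eq_iff]
  conv_rhs => rw [(Function.LeftInverse.surjective (f := conj) conj_conj).forall]
  simp only [conj_conj, map_add, map_mul]

theorem jet_coeff_eq_iff (ha : a ≠ 0) (ha' : a' ≠ 0) (hc₀ : c₀ ≠ 0) :
    a' * c = c₀ * a ∧ b' * conj c = c₀ * b ↔
      c = c₀ * a / a' ∧ b' / conj a' = c₀ / conj c₀ * (b / conj a) := by
  have hac : conj a ≠ 0 := (map_ne_zero _).2 ha
  have hac' : conj a' ≠ 0 := (map_ne_zero _).2 ha'
  have hc₀c : conj c₀ ≠ 0 := (map_ne_zero _).2 hc₀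
  constructor
  · rintro ⟨h₁, h₂⟩
    have hc : c = c₀ * a / a' := by rw [eq_div_iff ha', mul_comm, h₁]
    refine ⟨hc, ?_⟩
    rw [hc, map_div₀, map_mul] at h₂
    field_simp at h₂ ⊢
    linear_combination h₂
  · rintro ⟨rfl, h⟩
    refine ⟨by field_simp, ?_⟩
    rw [map_div₀, map_mul]
    field_simp at h ⊢
    linear_combination h

end Jets

theorem statement5_general (n : ℕ) (a b a' b' : ℕ → ℂ)
    (hab : ∀ i, 1 ≤ i → i ≤ n - 1 → ‖b i‖ < ‖a i‖)
    (hab' : ∀ i, 1 ≤ i → i ≤ n - 1 → ‖b' i‖ < ‖a' i‖)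
    (μ μ' : ℕ → ℂ)
    (hμ : ∀ i, μ i = b i / (starRingEnd ℂ) (a i))
    (hμ' : ∀ i, μ' i = b' i / (starRingEnd ℂ) (a' i)) :
    (∃ (c : ℕ → ℂ) (ψ : ℕ → ℂ → ℂ),
        (∀ j, j ≤ n - 1 → c j ≠ 0) ∧
        ((∀ j, j ≤ n - 1 → ∀ z, ψ j z = c j * z) ∨
         (∀ j, j ≤ n - 1 → ∀ z, ψ j z = c j * (starRingEnd ℂ) z)) ∧
        (∀ i, 1 ≤ i → i ≤ n - 1 → ∀ z : ℂ,
          a' i * ψ i z + b' i * (starRingEnd ℂ) (ψ i z) =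
            ψ 0 (a i * z + b i * (starRingEnd ℂ) z))) ↔
    (∃ c₀ : ℂ, ‖c₀‖ = 1 ∧
      ((∀ i, 1 ≤ i → i ≤ n - 1 → μ' i = c₀ * μ i) ∨
       (∀ i, 1 ≤ i → i ≤ n - 1 → μ' i = c₀ * (starRingEnd ℂ) (μ i)))) := by
  have ha : ∀ i, 1 ≤ i → i ≤ n - 1 → a i ≠ 0 := fun i h₁ h₂ =>
    norm_pos_iff.1 ((norm_nonneg _).trans_lt (hab i h₁ h₂))
  have ha' : ∀ i, 1 ≤ i → i ≤ n - 1 → a' i ≠ 0 := fun i h₁ h₂ =>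
    norm_pos_iff.1 ((norm_nonneg _).trans_lt (hab' i h₁ h₂))
  constructor
  · rintro ⟨c, ψ, hc, hψ, heq⟩
    have hc₀ := hc 0 (Nat.zero_le _)
    refine ⟨c 0 / conj (c 0), by rw [norm_div, norm_conj, div_self (norm_ne_zero_iff.2 hc₀)], ?_⟩
    rcases hψ with hψ | hψ
    · refine Or.inl fun i h₁ h₂ => ?_
      have hjet := linear_jet_eq_iff.1 fun z => by
        simpa only [hψ i h₂, hψ 0 (Nat.zero_le _)] using heq i h₁ h₂ z
      rw [hμ, hμ', ((jet_coeff_eq_iff (ha i h₁ h₂) (ha' i h₁ h₂) hc₀).1 hjet).2]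
    · refine Or.inr fun i h₁ h₂ => ?_
      have hjet := antilinear_jet_eq_iff.1 fun z => by
        simpa only [hψ i h₂, hψ 0 (Nat.zero_le _)] using heq i h₁ h₂ z
      rw [hμ, hμ', map_div₀,
        ((jet_coeff_eq_iff ((map_ne_zero _).2 (ha i h₁ h₂)) (ha' i h₁ h₂) hc₀).1 hjet).2,
        conj_conj]
  · rintro ⟨u, hu, h⟩
    obtain ⟨d, hd, rfl⟩ := exists_div_conj_eq_of_norm_eq_one hu
    rcases h with h | h
    · refine ⟨fun j => if j = 0 then d else d * a j / a' j,
        fun j z => (if j = 0 then d else d * a j / a' j) * z, fun j hj => ?_,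
        Or.inl fun _ _ _ => rfl, fun i h₁ h₂ => ?_⟩
      · dsimp only
        split_ifs
        exacts [hd, div_ne_zero (mul_ne_zero hd (ha j (by omega) hj)) (ha' j (by omega) hj)]
      · simp only [↓reduceIte, if_neg (show i ≠ 0 by omega)]
        refine linear_jet_eq_iff.2 ((jet_coeff_eq_iff (ha i h₁ h₂) (ha' i h₁ h₂) hd).2 ⟨rfl, ?_⟩)
        rw [← hμ, ← hμ', h i h₁ h₂]
    · refine ⟨fun j => if j = 0 then d else d * conj (a j) / a' j,
        fun j z => (if j = 0 then d else d * conj (a j) / a' j) * conj z, fun j hj => ?_,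
        Or.inr fun _ _ _ => rfl, fun i h₁ h₂ => ?_⟩
      · dsimp only
        split_ifs
        exacts [hd, div_ne_zero (mul_ne_zero hd ((map_ne_zero _).2 (ha j (by omega) hj)))
          (ha' j (by omega) hj)]
      · simp only [↓reduceIte, if_neg (show i ≠ 0 by omega)]
        refine antilinear_jet_eq_iff.2 ((jet_coeff_eq_iff ((map_ne_zero _).2 (ha i h₁ h₂))
          (ha' i h₁ h₂) hd).2 ⟨rfl, ?_⟩)
        rw [← map_div₀, ← hμ, ← hμ', h i h₁ h₂]

/-- Classification of orbits of tuples of orientation-preserving `1`-jets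
`z ↦ aᵢ·z + bᵢ·conj z` (with `|aᵢ| > |bᵢ|`) under the left-right action of liftable
`1`-jets: two tuples lie in the same orbit if and only if their first order
invariants `μᵢ = bᵢ/conj aᵢ` agree up to multiplication by a common unimodular
constant and simultaneous complex conjugation. -/
theorem statement5 (n : ℕ) (hn : 2 ≤ n) (a b a' b' : ℕ → ℂ)
    (hab : ∀ i, 1 ≤ i → i ≤ n - 1 → ‖b i‖ < ‖a i‖)
    (hab' : ∀ i, 1 ≤ i → i ≤ n - 1 → ‖b' i‖ < ‖a' i‖)
    (μ μ' : ℕ → ℂ)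
    (hμ : ∀ i, μ i = b i / (starRingEnd ℂ) (a i))
    (hμ' : ∀ i, μ' i = b' i / (starRingEnd ℂ) (a' i)) :
    (∃ (c : ℕ → ℂ) (ψ : ℕ → ℂ → ℂ),
        (∀ j, j ≤ n - 1 → c j ≠ 0) ∧
        ((∀ j, j ≤ n - 1 → ∀ z, ψ j z = c j * z) ∨
         (∀ j, j ≤ n - 1 → ∀ z, ψ j z = c j * (starRingEnd ℂ) z)) ∧
        (∀ i, 1 ≤ i → i ≤ n - 1 → ∀ z : ℂ,
          a' i * ψ i z + b' i * (starRingEnd ℂ) (ψ i z) =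
            ψ 0 (a i * z + b i * (starRingEnd ℂ) z))) ↔
    (∃ c₀ : ℂ, ‖c₀‖ = 1 ∧
      ((∀ i, 1 ≤ i → i ≤ n - 1 → μ' i = c₀ * μ i) ∨
       (∀ i, 1 ≤ i → i ≤ n - 1 → μ' i = c₀ * (starRingEnd ℂ) (μ i)))) :=
  statement5_general n a b a' b' hab hab' μ μ' hμ hμ'
end

section
/- Let f : ℂ → ℝ be C^∞-smooth on a neighborhood of 0 with f(0) = 0 and nonzero real Fréchet derivative at 0. Then there exists a function h : ℂ → ℂ, C^∞-smooth on a neighborhood of 0, with h(0) ≠ 0, such that Im(z·h(z)) = f(z) for all z in a neighborhood of 0. In particular, the map ψ(z) := z·h(z) satisfies ψ(0) = 0, has invertible real Fréchet derivative at 0, and Im(ψ(z)) = f(z) near 0. -/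
/-!
Hadamard's lemma writes `f z = ∫₀¹ Df(t z) z dt` near `0`. Every real linear functional `L` on `ℂ`
is `z ↦ Im (z w)` for a unique `w`, so taking for `h z` the `w` that represents `∫₀¹ Df(t z) dt`
gives `Im (z h z) = f z`. Then `h 0` represents `Df(0) ≠ 0`, and `h` is smooth because
differentiating under the integral sign preserves smoothness.
-/

open Complex Filter Topology MeasureTheory Metric Set Function

section

variable {E F : Type*} [NormedAddCommGroup E] [NormedSpace ℝ E]
  [NormedAddCommGroup F] [NormedSpace ℝ F]

theorem eventually_forall_Icc_smul {p : E → Prop} (hp : ∀ᶠ z in 𝓝 0, p z) :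
    ∀ᶠ z in 𝓝 0, ∀ t ∈ Icc (0 : ℝ) 1, p (t • z) := by
  obtain ⟨ε, hε, hball⟩ := Metric.eventually_nhds_iff_ball.1 hp
  filter_upwards [ball_mem_nhds 0 hε] with z hz t ht
  exact hball _ ((convex_ball 0 ε).smul_mem_of_zero_mem (mem_ball_self hε) hz ht)

theorem ContDiffAt.exists_contDiff_eventuallyEq [HasContDiffBump E] {n : ℕ} {g : E → F} {x : E}
    (hg : ContDiffAt ℝ n g x) : ∃ G : E → F, ContDiff ℝ n G ∧ G =ᶠ[𝓝 x] g := by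
  obtain ⟨u, hu, hgu⟩ := hg.contDiffOn le_rfl (by simp)
  obtain ⟨ε, hε, hball⟩ := Metric.mem_nhds_iff.1 hu
  let c : ContDiffBump x := ⟨ε / 4, ε / 2, by positivity, by linarith⟩
  refine ⟨fun y => c y • g y, contDiff_iff_contDiffAt.2 fun y => ?_, ?_⟩
  · by_cases hy : y ∈ tsupport c
    · rw [c.tsupport_eq] at hy
      have hyu : u ∈ 𝓝 y := mem_of_superset (isOpen_ball.mem_nhds
        (closedBall_subset_ball (by simp [c]; linarith) hy)) hball
      exact c.contDiff.contDiffAt.smul (hgu.contDiffAt hyu)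
    · exact (contDiffAt_const (c := (0 : F))).congr_of_eventuallyEq <|
        (notMem_tsupport_iff_eventuallyEq.1 hy).mono fun w hw => by simp [hw]
  · filter_upwards [ball_mem_nhds x (by positivity : 0 < ε / 4)] with y hy
    rw [c.one_of_mem_closedBall (ball_subset_closedBall hy), one_smul]

theorem ContDiffAt.eventually_eq_add_intervalIntegral_fderiv [CompleteSpace F] {f : E → F}
    (hf : ContDiffAt ℝ 1 f 0) :
    ∀ᶠ z in 𝓝 0, f z = f 0 + (∫ t in (0 : ℝ)..1, fderiv ℝ f (t • z)) z := by
  filter_upwards [eventually_forall_Icc_smul (hf.eventually (by simp))] with z hz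
  have hcont : ContinuousOn (fun t : ℝ => fderiv ℝ f (t • z)) (uIcc 0 1) := fun t ht =>
    (ContinuousAt.comp (f := fun s : ℝ => s • z)
      ((hz t (by simpa using ht)).fderiv_right (m := 0) le_rfl).continuousAt
      (by fun_prop)).continuousWithinAt
  rw [ContinuousLinearMap.intervalIntegral_apply hcont.intervalIntegrable]
  simpa using map_add_eq_sum_add_integral_iteratedFDeriv (n := 0) (x := 0) (y := z)
    (by simpa using hz)

end

universe u

section ParametricIntegral

variable {E F : Type u} [NormedAddCommGroup E] [NormedSpace ℝ E]
  [NormedAddCommGroup F] [NormedSpace ℝ F] {g : E → ℝ → F}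

theorem contDiff_uncurry_fderiv {n : ℕ} (hg : ContDiff ℝ (n + 1) (uncurry g)) :
    ContDiff ℝ n (uncurry fun z t => fderiv ℝ (g · t) z) :=
  ContDiff.fderiv (f := fun (p : E × ℝ) (y : E) => g y p.2)
    (hg.comp (contDiff_snd.prodMk (contDiff_snd.comp contDiff_fst))) contDiff_fst le_rfl

variable [ProperSpace E]

theorem hasFDerivAt_parametric_intervalIntegral (hg : ContDiff ℝ 1 (uncurry g)) (a b : ℝ)
    (z₀ : E) :
    HasFDerivAt (fun z => ∫ t in a..b, g z t) (∫ t in a..b, fderiv ℝ (g · t) z₀) z₀ := by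
  have hG := contDiff_uncurry_fderiv (n := 0) (by simpa using hg)
  obtain ⟨C, hC⟩ := (isCompact_closedBall z₀ 1 |>.prod isCompact_uIcc).exists_bound_of_continuousOn
    hG.continuous.continuousOn
  refine hasFDerivAt_integral_of_dominated_of_fderiv_le'' (μ := volume) (F := g)
    (F' := fun z t => fderiv ℝ (g · t) z) (bound := fun _ => C) (ball_mem_nhds z₀ one_pos)
    (Eventually.of_forall fun z => ?_) ?_ ?_ ?_ intervalIntegrable_const ?_
  · exact (hg.continuous.comp (Continuous.prodMk_right z)).aestronglyMeasurable
  · exact (hg.continuous.comp (Continuous.prodMk_right z₀)).intervalIntegrable a b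
  · exact (hG.continuous.comp (Continuous.prodMk_right z₀)).aestronglyMeasurable
  · filter_upwards [ae_restrict_mem measurableSet_uIoc] with t ht z hz
    exact hC (z, t) ⟨ball_subset_closedBall hz, uIoc_subset_uIcc ht⟩
  · refine Eventually.of_forall fun t z _ => DifferentiableAt.hasFDerivAt ?_
    exact (hg.differentiable one_ne_zero).comp (differentiable_id.prodMk (differentiable_const t)) z

theorem contDiff_parametric_intervalIntegral_of_contDiff {n : ℕ}
    (hg : ContDiff ℝ n (uncurry g)) (a b : ℝ) :
    ContDiff ℝ n fun z => ∫ t in a..b, g z t := by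
  induction n generalizing F with
  | zero =>
    simp only [CharP.cast_eq_zero, contDiff_zero] at hg ⊢
    exact intervalIntegral.continuous_parametric_intervalIntegral_of_continuous' hg a b
  | succ n ih =>
    have hderiv := hasFDerivAt_parametric_intervalIntegral (g := g)
      (hg.of_le (by exact_mod_cast Nat.le_add_left 1 n)) a b
    rw [Nat.cast_add_one, contDiff_succ_iff_fderiv]
    refine ⟨fun z => (hderiv z).differentiableAt, by simp, ?_⟩
    rw [funext fun z => (hderiv z).fderiv]
    exact ih (contDiff_uncurry_fderiv (by exact_mod_cast hg))

end ParametricIntegral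

theorem ContDiffAt.intervalIntegral_comp_smul {E F : Type u} [NormedAddCommGroup E]
    [NormedSpace ℝ E] [FiniteDimensional ℝ E] [NormedAddCommGroup F] [NormedSpace ℝ F]
    {n : ℕ∞} {g : E → F} (hg : ContDiffAt ℝ n g 0) :
    ContDiffAt ℝ n (fun z => ∫ t in (0 : ℝ)..1, g (t • z)) 0 := by
  rw [← contDiffWithinAt_univ, contDiffWithinAt_iff_forall_nat_le]
  intro m hm
  rw [contDiffWithinAt_univ]
  obtain ⟨G, hG, hGg⟩ := (hg.of_le (by exact_mod_cast hm)).exists_contDiff_eventuallyEq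
  have hG_avg : ContDiff ℝ m fun z => ∫ t in (0 : ℝ)..1, G (t • z) :=
    contDiff_parametric_intervalIntegral_of_contDiff
      (hG.comp (contDiff_snd.smul contDiff_fst)) 0 1
  refine hG_avg.contDiffAt.congr_of_eventuallyEq ?_
  filter_upwards [eventually_forall_Icc_smul hGg] with z hz
  exact (intervalIntegral.integral_congr fun t ht => hz t (by simpa using ht)).symm

theorem isUnit_fderiv_mul_at_zero {𝕜 𝔸 : Type*} [NontriviallyNormedField 𝕜] [NormedCommRing 𝔸]
    [NormedAlgebra 𝕜 𝔸] {h : 𝔸 → 𝔸} (hh : DifferentiableAt 𝕜 h 0) (hh0 : IsUnit (h 0)) :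
    IsUnit (fderiv 𝕜 (fun z => z * h z) 0) := by
  have hderiv : HasFDerivAt (fun z => z * h z) (h 0 • ContinuousLinearMap.id 𝕜 𝔸) 0 := by
    have := HasFDerivAt.mul (c := fun z => z) (hasFDerivAt_id (𝕜 := 𝕜) (0 : 𝔸)) hh.hasFDerivAt
    rwa [zero_smul, zero_add] at this
  obtain ⟨u, hu⟩ := hh0
  rw [hderiv.fderiv, ← hu]
  exact ⟨⟨_, (↑u⁻¹ : 𝔸) • ContinuousLinearMap.id 𝕜 𝔸, by ext; simp, by ext; simp⟩, rfl⟩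

/-- `imDual L = L I + L 1 * I`. -/
noncomputable def imDual : (ℂ →L[ℝ] ℝ) →L[ℝ] ℂ :=
  equivRealProdCLM.symm.toContinuousLinearMap.comp
    ((ContinuousLinearMap.apply ℝ ℝ I).prod (ContinuousLinearMap.apply ℝ ℝ 1))

theorem im_mul_imDual (L : ℂ →L[ℝ] ℝ) (z : ℂ) : (z * imDual L).im = L z := by
  have hz : z = z.re • (1 : ℂ) + z.im • I := by simp
  conv_rhs => rw [hz, map_add, map_smul, map_smul]
  simp [imDual, smul_eq_mul]

theorem imDual_injective : Injective imDual := fun L M hLM =>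
  ContinuousLinearMap.ext fun z => by rw [← im_mul_imDual, hLM, im_mul_imDual]

/-- For any germ `f : (ℂ, 0) → (ℝ, 0)` with nonzero real Fréchet derivative at `0`
there is a smooth `h` with `h 0 ≠ 0` such that `Im (z·h z) = f z` near `0`.
In particular `ψ z := z·h z` is an orientation-preserving liftable local
diffeomorphism germ (it fixes `0` and has invertible derivative at `0`) whose
imaginary part is `f`. -/
theorem statement7 (f : ℂ → ℝ) (hf : ContDiffAt ℝ (⊤ : ℕ∞) f 0) (hf0 : f 0 = 0)
    (hD : fderiv ℝ f 0 ≠ 0) :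
    ∃ h : ℂ → ℂ, ContDiffAt ℝ (⊤ : ℕ∞) h 0 ∧ h 0 ≠ 0 ∧
      (∀ᶠ z in 𝓝 0, (z * h z).im = f z) ∧
      (fun z : ℂ => z * h z) 0 = 0 ∧
      IsUnit (fderiv ℝ (fun z : ℂ => z * h z) 0) := by
  set h : ℂ → ℂ := fun z => imDual (∫ t in (0 : ℝ)..1, fderiv ℝ f (t • z))
  have h_smooth : ContDiffAt ℝ (⊤ : ℕ∞) h 0 :=
    imDual.contDiff.comp_contDiffAt _
      (hf.fderiv_right (m := (⊤ : ℕ∞)) (by simp)).intervalIntegral_comp_smul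
  have h0 : h 0 ≠ 0 := by
    simpa [h] using (map_ne_zero_iff _ imDual_injective).2 hD
  refine ⟨h, h_smooth, h0, ?_, zero_mul _, ?_⟩
  · filter_upwards [(hf.of_le (by simp)).eventually_eq_add_intervalIntegral_fderiv] with z hz
    rw [im_mul_imDual, hz, hf0, zero_add]
  · exact isUnit_fderiv_mul_at_zero (h_smooth.differentiableAt (by simp)) h0.isUnit
end

section
/- Let μ be a real number with 0 < |μ| < 1, and let φ : ℂ → ℂ be C^∞-smooth on a neighborhood of 0 with φ(0) = 0, ∂φ/∂z(0) = 1 and ∂φ/∂z̄(0) = μ. Then there exist functions g, h : ℂ → ℂ, C^∞-smooth on a neighborhood of 0, with g(0) ≠ 0 and h(0) ≠ 0, such that for all z in a neighborhood of 0: z·g(z) + μ·conj(z)·conj(g(z)) = φ(z)·h(z). -/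
open Complex Filter Topology

/-- The Wirtinger derivative `∂φ/∂z` at `0` of a map `φ : ℂ → ℂ`, computed from its
real Fréchet derivative `D = fderiv ℝ φ 0` as `(D 1 − i·D i)/2`. -/
noncomputable def wirtingerDz (φ : ℂ → ℂ) : ℂ :=
  (fderiv ℝ φ 0 1 - Complex.I * fderiv ℝ φ 0 Complex.I) / 2

/-- The Wirtinger derivative `∂φ/∂z̄` at `0` of a map `φ : ℂ → ℂ`, computed from its
real Fréchet derivative `D = fderiv ℝ φ 0` as `(D 1 + i·D i)/2`. -/
noncomputable def wirtingerDzbar (φ : ℂ → ℂ) : ℂ :=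
  (fderiv ℝ φ 0 1 + Complex.I * fderiv ℝ φ 0 Complex.I) / 2

/-!
By Hadamard's lemma, `φ z = z * a z + conj z * b z` with smooth `a`, `b`, `a 0 = 1`, `b 0 = μ`.
Such a splitting is determined only up to `(a, b) ↦ (a + conj z * w, b - z * w)`, so it suffices
to find a smooth `h` with `h 0 = 1` for which `(a * h, b * h)` is equivalent to a pair
`(g, μ * conj g)`, i.e. for which `b * h - μ * conj a * conj h = z * K` with `K` smooth.
Hadamard's lemma applied to `b - μ * conj a = z * p + conj z * q` shows that
`h = 1 - conj z * q / b` works (here `b 0 = μ ≠ 0`); then `g = a * h + conj z * w`, where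
`w + μ * conj w = K` is solvable for `w` because `μ ^ 2 ≠ 1`.
-/

open Metric Set MeasureTheory
open scoped Interval

universe u

lemma uIoc_zero_one_subset_Icc : Ι (0:ℝ) 1 ⊆ Icc 0 1 := by
  rw [uIoc_of_le zero_le_one]
  exact Ioc_subset_Icc_self

section SegmentIntegral

variable {E F : Type u} [NormedAddCommGroup E] [NormedSpace ℝ E]
  [NormedAddCommGroup F] {r : ℝ} {G : E → F} {x₀ : E}

lemma ContinuousOn.exists_eventually_norm_comp_smul_le [ProperSpace E]
    (hG : ContinuousOn G (ball 0 r)) (hx₀ : x₀ ∈ ball 0 r) :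
    ∃ M, ∀ᶠ x in 𝓝 x₀, ∀ t ∈ Icc (0:ℝ) 1, t • x ∈ ball (0:E) r ∧ ‖G (t • x)‖ ≤ M := by
  obtain ⟨ρ, hx₀ρ, hρr⟩ := exists_between (mem_ball_zero_iff.1 hx₀)
  have hρ : closedBall (0:E) ρ ⊆ ball 0 r := closedBall_subset_ball hρr
  obtain ⟨M, hM⟩ := (isCompact_closedBall (0:E) ρ).exists_bound_of_continuousOn (hG.mono hρ)
  refine ⟨M, ?_⟩
  filter_upwards [(continuous_norm.tendsto x₀).eventually (gt_mem_nhds hx₀ρ)] with x hx t ht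
  have htx : t • x ∈ closedBall (0:E) ρ :=
    (convex_closedBall 0 ρ).smul_mem_of_zero_mem
      (mem_closedBall_self ((norm_nonneg x₀).trans hx₀ρ.le)) (mem_closedBall_zero_iff.2 hx.le) ht
  exact ⟨hρ htx, hM _ htx⟩

variable [NormedSpace ℝ F]

lemma norm_pow_smul_le {t : ℝ} (ht : t ∈ Icc (0:ℝ) 1) (k : ℕ) {v : F} {M : ℝ} (hv : ‖v‖ ≤ M) :
    ‖t ^ k • v‖ ≤ M :=
  calc ‖t ^ k • v‖ = t ^ k * ‖v‖ := by rw [norm_smul, norm_pow, Real.norm_of_nonneg ht.1]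
    _ ≤ 1 * M := by gcongr; exact pow_le_one₀ ht.1 ht.2
    _ = M := one_mul M

lemma ContinuousOn.intervalIntegrable_pow_smul_comp_smul (k : ℕ)
    (hG : ContinuousOn G (ball 0 r)) {x : E} (hx : ∀ t ∈ Icc (0:ℝ) 1, t • x ∈ ball (0:E) r) :
    IntervalIntegrable (fun t : ℝ => t ^ k • G (t • x)) volume 0 1 :=
  ((continuous_pow k).continuousOn.smul (hG.comp (continuous_id.smul continuous_const).continuousOn
    hx)).intervalIntegrable_of_Icc zero_le_one

variable [ProperSpace E]

lemma ContinuousOn.integral_pow_smul_comp_smul (k : ℕ) (hG : ContinuousOn G (ball 0 r)) :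
    ContinuousOn (fun x => ∫ t in (0:ℝ)..1, t ^ k • G (t • x)) (ball 0 r) := by
  intro x₀ hx₀
  obtain ⟨M, hM⟩ := hG.exists_eventually_norm_comp_smul_le hx₀
  refine (intervalIntegral.continuousAt_of_dominated_interval (bound := fun _ => M) ?_ ?_
    intervalIntegrable_const ?_).continuousWithinAt
  · filter_upwards [hM] with x hx
    exact (hG.intervalIntegrable_pow_smul_comp_smul k fun t ht => (hx t ht).1).def'.1
  · filter_upwards [hM] with x hx
    exact Eventually.of_forall fun t ht =>
      norm_pow_smul_le (uIoc_zero_one_subset_Icc ht) k (hx t (uIoc_zero_one_subset_Icc ht)).2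
  · refine Eventually.of_forall fun t ht => ?_
    have hmem := (hM.self_of_nhds t (uIoc_zero_one_subset_Icc ht)).1
    exact ((hG.continuousAt (isOpen_ball.mem_nhds hmem)).comp
      (continuous_const_smul t).continuousAt).const_smul _

lemma ContDiffOn.hasFDerivAt_integral_pow_smul_comp_smul [CompleteSpace F] (k : ℕ)
    (hG : ContDiffOn ℝ 1 G (ball 0 r)) (hx₀ : x₀ ∈ ball 0 r) :
    HasFDerivAt (fun x => ∫ t in (0:ℝ)..1, t ^ k • G (t • x))
      (∫ t in (0:ℝ)..1, t ^ (k + 1) • fderiv ℝ G (t • x₀)) x₀ := by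
  have hG' : ContinuousOn (fderiv ℝ G) (ball 0 r) :=
    hG.continuousOn_fderiv_of_isOpen isOpen_ball le_rfl
  have hdiff : ∀ y ∈ ball (0:E) r, HasFDerivAt G (fderiv ℝ G y) y := fun y hy =>
    ((hG.differentiableOn one_ne_zero y hy).differentiableAt (isOpen_ball.mem_nhds hy)).hasFDerivAt
  obtain ⟨M, hM⟩ := hG'.exists_eventually_norm_comp_smul_le hx₀
  have hx₀' : ∀ t ∈ Icc (0:ℝ) 1, t • x₀ ∈ ball (0:E) r := fun t ht => (hM.self_of_nhds t ht).1
  refine intervalIntegral.hasFDerivAt_integral_of_dominated_of_fderiv_le (𝕜 := ℝ)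
    (bound := fun _ => M) (F' := fun x t => t ^ (k + 1) • fderiv ℝ G (t • x)) hM ?_
    (hG.continuousOn.intervalIntegrable_pow_smul_comp_smul k hx₀')
    (hG'.intervalIntegrable_pow_smul_comp_smul (k + 1) hx₀').def'.1 ?_ intervalIntegrable_const ?_
  · filter_upwards [hM] with x hx
    exact (hG.continuousOn.intervalIntegrable_pow_smul_comp_smul k fun t ht => (hx t ht).1).def'.1
  · exact Eventually.of_forall fun t ht x hx =>
      norm_pow_smul_le (uIoc_zero_one_subset_Icc ht) (k + 1) (hx t (uIoc_zero_one_subset_Icc ht)).2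
  · refine Eventually.of_forall fun t ht x hx => ?_
    have hcomp := ((hdiff _ (hx t (uIoc_zero_one_subset_Icc ht)).1).comp x
      ((hasFDerivAt_id x).const_smul t)).const_smul (t ^ k)
    refine hcomp.congr_fderiv ?_
    ext v
    simp [pow_succ, mul_smul]

/- The weight `t ^ k` keeps the family closed under differentiation: the derivative of
`x ↦ ∫ t ^ k • G (t • x)` is `x ↦ ∫ t ^ (k + 1) • fderiv ℝ G (t • x)`. -/
theorem ContDiffOn.integral_pow_smul_comp_smul [CompleteSpace F] {n : ℕ} (k : ℕ)
    (hG : ContDiffOn ℝ n G (ball 0 r)) :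
    ContDiffOn ℝ n (fun x => ∫ t in (0:ℝ)..1, t ^ k • G (t • x)) (ball 0 r) := by
  induction n generalizing F k G with
  | zero => simpa using hG.continuousOn.integral_pow_smul_comp_smul k
  | succ n ih =>
    have hderiv := fun x (hx : x ∈ ball (0:E) r) =>
      (hG.of_le (by norm_cast; omega)).hasFDerivAt_integral_pow_smul_comp_smul k hx
    rw [Nat.cast_add, Nat.cast_one, contDiffOn_succ_iff_fderiv_of_isOpen isOpen_ball] at hG ⊢
    refine ⟨fun x hx => (hderiv x hx).differentiableAt.differentiableWithinAt, by simp, ?_⟩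
    exact (ih (k + 1) hG.2.2).congr fun x hx => (hderiv x hx).fderiv

end SegmentIntegral

lemma ContDiffAt.exists_contDiffOn_ball {𝕜 E F : Type*} [NontriviallyNormedField 𝕜]
    [NormedAddCommGroup E] [NormedSpace 𝕜 E] [NormedAddCommGroup F] [NormedSpace 𝕜 F] {f : E → F}
    {n : ℕ} {x : E} (hf : ContDiffAt 𝕜 n f x) :
    ∃ r > 0, ContDiffOn 𝕜 n f (ball x r) := by
  obtain ⟨u, hu, hfu⟩ := hf.contDiffOn le_rfl (by simp)
  obtain ⟨r, hr, hball⟩ := Metric.mem_nhds_iff.1 hu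
  exact ⟨r, hr, hfu.mono hball⟩

section Hadamard

variable {E F : Type u} [NormedAddCommGroup E] [NormedSpace ℝ E]
  [NormedAddCommGroup F] [NormedSpace ℝ F] [CompleteSpace F] {f : E → F}

noncomputable def fderivSegmentAverage (f : E → F) (x : E) : E →L[ℝ] F :=
  ∫ t in (0:ℝ)..1, fderiv ℝ f (t • x)

lemma fderivSegmentAverage_zero : fderivSegmentAverage f 0 = fderiv ℝ f 0 := by
  simp [fderivSegmentAverage]

lemma ContDiffAt.contDiffAt_fderivSegmentAverage [ProperSpace E] {n : ℕ}
    (hf : ContDiffAt ℝ (n + 1 : ℕ) f 0) : ContDiffAt ℝ n (fderivSegmentAverage f) 0 := by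
  obtain ⟨r, hr, hfr⟩ := hf.exists_contDiffOn_ball
  have hD : ContDiffOn ℝ n (fderiv ℝ f) (ball 0 r) :=
    hfr.fderiv_of_isOpen isOpen_ball (by norm_cast)
  refine ((hD.integral_pow_smul_comp_smul 0).congr fun x _ => ?_).contDiffAt (ball_mem_nhds 0 hr)
  simp [fderivSegmentAverage]

lemma ContDiffAt.eventually_eq_add_fderivSegmentAverage_apply (hf : ContDiffAt ℝ 1 f 0) :
    ∀ᶠ x in 𝓝 0, f x = f 0 + fderivSegmentAverage f x x := by
  obtain ⟨r, hr, hfr⟩ := hf.exists_contDiffOn_ball (n := 1)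
  filter_upwards [ball_mem_nhds 0 hr] with x hx
  have hseg : ∀ t ∈ Icc (0:ℝ) 1, t • x ∈ ball (0:E) r := fun t ht =>
    (convex_ball 0 r).smul_mem_of_zero_mem (mem_ball_self hr) hx ht
  have htaylor := map_add_eq_sum_add_integral_iteratedFDeriv (n := 0) (x := 0) (y := x)
    fun t ht => by simpa using hfr.contDiffAt (isOpen_ball.mem_nhds (by simpa using hseg t ht))
  have hint : IntervalIntegrable (fun t : ℝ => fderiv ℝ f (t • x)) volume 0 1 := by
    simpa using (hfr.continuousOn_fderiv_of_isOpen isOpen_ball le_rfl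
      ).intervalIntegrable_pow_smul_comp_smul 0 hseg
  simpa [iteratedFDeriv_one_apply, fderivSegmentAverage,
    ContinuousLinearMap.intervalIntegral_apply hint] using htaylor

end Hadamard

open ComplexConjugate

lemma ContDiffAt.conj {E : Type*} [NormedAddCommGroup E] [NormedSpace ℝ E] {f : E → ℂ} {x : E}
    {n : WithTop ℕ∞} (hf : ContDiffAt ℝ n f x) : ContDiffAt ℝ n (fun y => conj (f y)) x :=
  conjCLE.contDiff.contDiffAt.comp x hf

lemma ContinuousLinearMap.apply_eq_mul_add_conj_mul (L : ℂ →L[ℝ] ℂ) (z : ℂ) :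
    L z = z * ((L 1 - I * L I) / 2) + conj z * ((L 1 + I * L I) / 2) := by
  have hL : L z = z.re • L 1 + z.im • L I := by
    conv_lhs => rw [← re_add_im z]
    rw [show (z.re : ℂ) + z.im * I = z.re • (1 : ℂ) + z.im • I by simp [Complex.real_smul],
      map_add, L.map_smul, L.map_smul]
  rw [hL]
  conv_rhs => rw [← re_add_im z]
  simp only [map_add, map_mul, conj_ofReal, conj_I, Complex.real_smul]
  linear_combination (z.im * L I) * I_sq

lemma ContDiffAt.exists_eq_mul_add_conj_mul {φ : ℂ → ℂ} (hφ : ContDiffAt ℝ (⊤ : ℕ∞) φ 0)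
    (hφ0 : φ 0 = 0) :
    ∃ a b : ℂ → ℂ, ContDiffAt ℝ (⊤ : ℕ∞) a 0 ∧ ContDiffAt ℝ (⊤ : ℕ∞) b 0 ∧
      a 0 = wirtingerDz φ ∧ b 0 = wirtingerDzbar φ ∧
      ∀ᶠ z in 𝓝 0, φ z = z * a z + conj z * b z := by
  set L := fderivSegmentAverage φ
  have hL : ContDiffAt ℝ (⊤ : ℕ∞) L 0 := contDiffAt_infty.2 fun n =>
    (hφ.of_le (by exact_mod_cast le_top)).contDiffAt_fderivSegmentAverage
  refine ⟨fun z => (L z 1 - I * L z I) / 2, fun z => (L z 1 + I * L z I) / 2, ?_, ?_,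
    by simp [L, fderivSegmentAverage_zero, wirtingerDz],
    by simp [L, fderivSegmentAverage_zero, wirtingerDzbar], ?_⟩
  · exact ((hL.clm_apply contDiffAt_const).sub
      (contDiffAt_const.mul (hL.clm_apply contDiffAt_const))).div_const 2
  · exact ((hL.clm_apply contDiffAt_const).add
      (contDiffAt_const.mul (hL.clm_apply contDiffAt_const))).div_const 2
  · filter_upwards
      [(hφ.of_le (by exact_mod_cast le_top)).eventually_eq_add_fderivSegmentAverage_apply] with z hz
    rw [hz, hφ0, zero_add]
    exact (L z).apply_eq_mul_add_conj_mul z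

lemma div_add_ofReal_mul_conj_div {μ : ℝ} (hμ : μ ^ 2 ≠ 1) (K : ℂ) :
    (K - μ * conj K) / (1 - μ ^ 2) + μ * conj ((K - μ * conj K) / (1 - μ ^ 2)) = K := by
  have hμ' : (1 : ℂ) - μ ^ 2 ≠ 0 := by exact_mod_cast sub_ne_zero.2 hμ.symm
  simp only [map_div₀, map_sub, map_mul, map_pow, map_one, conj_ofReal, conj_conj]
  field_simp
  ring

lemma mul_add_ofReal_mul_conj_mul_conj {μ : ℝ} {z a b h K w : ℂ}
    (hK : b * h - μ * conj a * conj h = z * K) (hw : w + μ * conj w = K) :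
    z * (a * h + conj z * w) + μ * conj z * conj (a * h + conj z * w)
      = (z * a + conj z * b) * h := by
  simp only [map_add, map_mul, conj_conj]
  linear_combination z * conj z * hw - conj z * hK

lemma sub_ofReal_mul_conj_mul_conj_eq {μ : ℝ} {z a b p q : ℂ} (hb : b ≠ 0)
    (hc : b - μ * conj a = z * p + conj z * q) :
    b * (1 - conj z * (q * b⁻¹)) - μ * conj a * conj (1 - conj z * (q * b⁻¹))
      = z * (p + μ * conj a * conj (q * b⁻¹)) := by
  have hbq : b * (q * b⁻¹) = q := by field_simp
  simp only [map_sub, map_one, map_mul, conj_conj]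
  linear_combination hc - conj z * hbq

/-- For `0 < |μ| < 1` real and a germ `φ` of `(ℂ, 0)` with linear part
`z ↦ z + μ·conj z`, there are smooth `g, h`, nonvanishing at `0`, such that
`z·g z + μ·conj z·conj (g z) = φ z·h z` near `0` (equation (14) of the paper). -/
theorem statement10 (μ : ℝ) (hμ0 : 0 < |μ|) (hμ1 : |μ| < 1)
    (φ : ℂ → ℂ) (hφ : ContDiffAt ℝ (⊤ : ℕ∞) φ 0) (hφ0 : φ 0 = 0)
    (hdz : wirtingerDz φ = 1) (hdzbar : wirtingerDzbar φ = (μ : ℂ)) :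
    ∃ g h : ℂ → ℂ, ContDiffAt ℝ (⊤ : ℕ∞) g 0 ∧ ContDiffAt ℝ (⊤ : ℕ∞) h 0 ∧
      g 0 ≠ 0 ∧ h 0 ≠ 0 ∧
      ∀ᶠ z in 𝓝 0,
        z * g z + (μ : ℂ) * (starRingEnd ℂ) z * (starRingEnd ℂ) (g z)
          = φ z * h z := by
  have hμ2 : μ ^ 2 ≠ 1 := by nlinarith [sq_abs μ, abs_nonneg μ]
  obtain ⟨a, b, ha, hb, ha0, hb0, hφab⟩ := hφ.exists_eq_mul_add_conj_mul hφ0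
  rw [hdz] at ha0
  rw [hdzbar] at hb0
  have hb0' : b 0 ≠ 0 := by rw [hb0]; exact_mod_cast abs_pos.1 hμ0
  have hc : ContDiffAt ℝ (⊤ : ℕ∞) (fun z => b z - μ * conj (a z)) 0 :=
    hb.sub (contDiffAt_const.mul ha.conj)
  obtain ⟨p, q, hp, hq, -, -, hpq⟩ := hc.exists_eq_mul_add_conj_mul (by simp [ha0, hb0])
  have hqb : ContDiffAt ℝ (⊤ : ℕ∞) (fun z => q z * (b z)⁻¹) 0 := hq.mul (hb.inv hb0')
  set h := fun z => 1 - conj z * (q z * (b z)⁻¹)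
  set K := fun z => p z + μ * conj (a z) * conj (q z * (b z)⁻¹)
  have hh : ContDiffAt ℝ (⊤ : ℕ∞) h 0 := contDiffAt_const.sub (contDiffAt_id.conj.mul hqb)
  have hK : ContDiffAt ℝ (⊤ : ℕ∞) K 0 := hp.add ((contDiffAt_const.mul ha.conj).mul hqb.conj)
  refine ⟨fun z => a z * h z + conj z * ((K z - μ * conj (K z)) / (1 - μ ^ 2)), h,
    (ha.mul hh).add (contDiffAt_id.conj.mul ((hK.sub (contDiffAt_const.mul hK.conj)).div_const _)),
    hh, by simp [h, ha0], by simp [h], ?_⟩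
  filter_upwards [hφab, hpq, hb.continuousAt.eventually_ne hb0'] with z hφz hcz hbz
  rw [hφz]
  exact mul_add_ofReal_mul_conj_mul_conj (sub_ofReal_mul_conj_mul_conj_eq hbz hcz)
    (div_add_ofReal_mul_conj_div hμ2 _)
end

section
/- Let f : ℂ → ℂ be C^∞-smooth on a neighborhood of 0 and flat at 0, i.e., all iterated (real) derivatives of f at 0 vanish (so f(0) = 0 and iteratedFDeriv ℝ n f 0 = 0 for every n). Then there exists a function g : ℂ → ℂ, C^∞-smooth on a neighborhood of 0 and flat at 0, such that f(z) = z·g(z) for all z in a neighborhood of 0. -/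
open Complex Filter Topology

/-!
A flat function `h` is `o(‖z‖ ^ M)` at `0` for every `M` (mean value theorem, by induction on
`M` applied to `fderiv h`), so each quotient `h z / z ^ m` is `o(‖z‖)` and has derivative `0`
at `0`. Away from `0` the quotient rule shows that the derivative of `h / z ^ m` is
`h' / z ^ m + (L ∘ h) / z ^ (m + 1)` for a real-linear `L`, where `h'` and `L ∘ h` are again
smooth and flat. Hence the class of such quotients is closed under differentiation, and an
induction on the order shows that all of them are smooth and flat at `0`; take `g = f / z`.
-/

open Asymptotics ContDiff

section Flat

variable {E F G : Type*} [NormedAddCommGroup E] [NormedSpace ℝ E]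
  [NormedAddCommGroup F] [NormedSpace ℝ F] [NormedAddCommGroup G] [NormedSpace ℝ G]

def FlatAt (f : E → F) (x : E) : Prop :=
  ∀ n : ℕ, iteratedFDeriv ℝ n f x = 0

theorem iteratedFDeriv_zero_eq_zero_iff {f : E → F} {x : E} :
    iteratedFDeriv ℝ 0 f x = 0 ↔ f x = 0 := by
  rw [← norm_eq_zero, norm_iteratedFDeriv_zero, norm_eq_zero]

theorem iteratedFDeriv_succ_eq_zero_iff {f : E → F} {x : E} {n : ℕ} :
    iteratedFDeriv ℝ (n + 1) f x = 0 ↔ iteratedFDeriv ℝ n (fderiv ℝ f) x = 0 := by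
  rw [← norm_eq_zero, ← norm_iteratedFDeriv_fderiv, norm_eq_zero]

namespace FlatAt

variable {f : E → F} {x : E}

theorem apply_eq_zero (hf : FlatAt f x) : f x = 0 := iteratedFDeriv_zero_eq_zero_iff.mp (hf 0)

protected theorem fderiv (hf : FlatAt f x) : FlatAt (fderiv ℝ f) x := fun n =>
  iteratedFDeriv_succ_eq_zero_iff.mp (hf (n + 1))

theorem continuousLinearMap_comp (hf : FlatAt f x) (hfs : ContDiffAt ℝ ∞ f x) (L : F →L[ℝ] G) :
    FlatAt (L ∘ f) x := fun n => by
  rw [L.iteratedFDeriv_comp_left hfs (by exact_mod_cast le_top), hf n]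
  ext
  simp

end FlatAt

end Flat

universe u

-- `E` and `F` share a universe so that the induction can pass from `f` to `fderiv ℝ f`.
theorem FlatAt.isLittleO_norm_pow {E F : Type u} [NormedAddCommGroup E] [NormedSpace ℝ E]
    [NormedAddCommGroup F] [NormedSpace ℝ F] {f : E → F} (hf : FlatAt f 0)
    (hfs : ContDiffAt ℝ ∞ f 0) (M : ℕ) :
    f =o[𝓝 0] fun x => ‖x‖ ^ M := by
  induction M generalizing F with
  | zero =>
    simpa [isLittleO_one_iff, hf.apply_eq_zero] using hfs.continuousAt.tendsto
  | succ M ih =>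
    have hf' := ih hf.fderiv (hfs.fderiv_right le_rfl)
    obtain ⟨r, hr, hdiff⟩ := Metric.eventually_nhds_iff_ball.mp
      ((hfs.of_le (by exact_mod_cast le_top : (1 : WithTop ℕ∞) ≤ ∞)).eventually (by simp))
    have hball : 𝓝[Metric.ball (0 : E) r] 0 = 𝓝 0 :=
      Metric.isOpen_ball.nhdsWithin_eq (Metric.mem_ball_self hr)
    have := (convex_ball (0 : E) r).isLittleO_pow_succ (Metric.mem_ball_self hr)
      (fun y hy => ((hdiff y hy).differentiableAt one_ne_zero).hasFDerivAt.hasFDerivWithinAt)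
      (by simpa [hball] using hf')
    simpa [hball, hf.apply_eq_zero] using this

section DivPow

variable {E : Type} [NormedAddCommGroup E] [NormedSpace ℂ E] {h : ℂ → E}

-- At `z = 0` this is the junk value `(0 ^ m)⁻¹ • h 0`, which is `0` once `h 0 = 0`.
noncomputable def divPow (m : ℕ) (h : ℂ → E) (z : ℂ) : E := (z ^ m)⁻¹ • h z

theorem FlatAt.divPow_apply_zero (hf : FlatAt h 0) (m : ℕ) : divPow m h 0 = 0 := by
  simp [divPow, hf.apply_eq_zero]

theorem FlatAt.isLittleO_divPow (hf : FlatAt h 0) (hs : ContDiffAt ℝ ∞ h 0) (m M : ℕ) :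
    divPow m h =o[𝓝 0] fun z => ‖z‖ ^ M := by
  refine isLittleO_iff.mpr fun ε hε => ?_
  filter_upwards [isLittleO_iff.mp (hf.isLittleO_norm_pow hs (M + m)) hε] with z hz
  rcases eq_or_ne z 0 with rfl | hz0
  · simp only [hf.divPow_apply_zero, norm_zero, norm_pow]
    positivity
  · have hzm : 0 < ‖z‖ ^ m := pow_pos (norm_pos_iff.mpr hz0) m
    rw [norm_pow, norm_norm, pow_add] at hz
    rw [divPow, norm_smul, norm_inv, norm_pow, norm_pow, norm_norm, inv_mul_le_iff₀ hzm]
    linarith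

theorem FlatAt.hasFDerivAt_divPow_apply_zero (hf : FlatAt h 0) (hs : ContDiffAt ℝ ∞ h 0) (m : ℕ) :
    HasFDerivAt (divPow m h) (0 : ℂ →L[ℝ] E) 0 := by
  rw [hasFDerivAt_iff_isLittleO_nhds_zero]
  simpa [hf.divPow_apply_zero] using isLittleO_norm_right.mp (by simpa using hf.isLittleO_divPow hs m 1)

theorem hasFDerivAt_divPow {z : ℂ} (hz : z ≠ 0) {h' : ℂ →L[ℝ] E} (hh : HasFDerivAt h h' z)
    (m : ℕ) : HasFDerivAt (divPow m h) ((z ^ m)⁻¹ • h' +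
      (z ^ (m + 1))⁻¹ • ((-(m : ℝ)) • (ContinuousLinearMap.lsmul ℝ ℂ).flip) (h z)) z := by
  have hinv := ((hasDerivAt_pow m z).inv (pow_ne_zero m hz)).hasFDerivAt.restrictScalars ℝ
  refine (hinv.smul hh).congr_fderiv ?_
  ext w
  have hscalar : w * (-(m * z ^ (m - 1)) / (z ^ m) ^ 2) = -((z ^ (m + 1))⁻¹ * (m * w)) := by
    rcases m with _ | m
    · simp
    · rw [Nat.add_sub_cancel]
      field_simp
      ring
  simp only [Pi.inv_apply, add_apply, smul_apply, ContinuousLinearMap.smulRight_apply,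
    ContinuousLinearMap.coe_restrictScalars', ContinuousLinearMap.toSpanSingleton_apply,
    smul_eq_mul, neg_smul, smul_neg, neg_apply, ContinuousLinearMap.flip_apply,
    ContinuousLinearMap.lsmul_apply, add_right_inj]
  rw [hscalar, neg_smul, mul_smul, mul_smul, Nat.cast_smul_eq_nsmul, Nat.cast_smul_eq_nsmul]

theorem FlatAt.exists_eventually_hasFDerivAt_divPow (hf : FlatAt h 0) (hs : ContDiffAt ℝ ∞ h 0)
    (m : ℕ) : ∃ L : E →L[ℝ] ℂ →L[ℝ] E, ∀ᶠ z in 𝓝 0,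
      HasFDerivAt (divPow m h) (divPow m (fderiv ℝ h) z + divPow (m + 1) (L ∘ h) z) z := by
  refine ⟨(-(m : ℝ)) • (ContinuousLinearMap.lsmul ℝ ℂ).flip, ?_⟩
  filter_upwards [(hs.of_le (by exact_mod_cast le_top : (1 : WithTop ℕ∞) ≤ ∞)).eventually
    (by simp)] with z hz
  rcases eq_or_ne z 0 with rfl | hz0
  · rw [hf.fderiv.divPow_apply_zero, (hf.continuousLinearMap_comp hs _).divPow_apply_zero, add_zero]
    exact hf.hasFDerivAt_divPow_apply_zero hs m
  · exact hasFDerivAt_divPow hz0 (hz.differentiableAt one_ne_zero).hasFDerivAt m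

theorem FlatAt.contDiffAt_divPow (hf : FlatAt h 0) (hs : ContDiffAt ℝ ∞ h 0) (m : ℕ) :
    ContDiffAt ℝ ∞ (divPow m h) 0 := by
  refine contDiffAt_infty.mpr fun k => ?_
  induction k generalizing E m h with
  | zero =>
    obtain ⟨L, hL⟩ := hf.exists_eventually_hasFDerivAt_divPow hs m
    obtain ⟨u, hu, hd⟩ := hL.exists_mem
    exact contDiffAt_zero.mpr ⟨u, hu, fun z hz => (hd z hz).continuousAt.continuousWithinAt⟩
  | succ k ih =>
    obtain ⟨L, hL⟩ := hf.exists_eventually_hasFDerivAt_divPow hs m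
    rw [Nat.cast_succ, contDiffAt_succ_iff_hasFDerivAt]
    exact ⟨_, hL.exists_mem, (ih hf.fderiv (hs.fderiv_right le_rfl) m).add
      (ih (hf.continuousLinearMap_comp hs L) (hs.continuousLinearMap_comp L) (m + 1))⟩

theorem FlatAt.divPow (hf : FlatAt h 0) (hs : ContDiffAt ℝ ∞ h 0) (m : ℕ) :
    FlatAt (divPow m h) 0 := by
  intro n
  induction n generalizing E m h with
  | zero => exact iteratedFDeriv_zero_eq_zero_iff.mpr (hf.divPow_apply_zero m)
  | succ n ih =>
    obtain ⟨L, hL⟩ := hf.exists_eventually_hasFDerivAt_divPow hs m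
    have hderiv :
        fderiv ℝ (divPow m h) =ᶠ[𝓝 0] divPow m (fderiv ℝ h) + divPow (m + 1) (L ∘ h) :=
      hL.mono fun z hz => hz.fderiv
    have hA := hf.fderiv
    have hAs : ContDiffAt ℝ ∞ (fderiv ℝ h) 0 := hs.fderiv_right le_rfl
    have hB := hf.continuousLinearMap_comp hs L
    have hBs := hs.continuousLinearMap_comp L
    rw [iteratedFDeriv_succ_eq_zero_iff, (hderiv.iteratedFDeriv ℝ n).eq_of_nhds,
      iteratedFDeriv_add_apply ((hA.contDiffAt_divPow hAs m).of_le (by exact_mod_cast le_top))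
        ((hB.contDiffAt_divPow hBs (m + 1)).of_le (by exact_mod_cast le_top)),
      ih hA hAs m, ih hB hBs (m + 1), add_zero]

end DivPow

theorem statement12_general (f : ℂ → ℂ) (hf : ContDiffAt ℝ (⊤ : ℕ∞) f 0)
    (hflat : ∀ n : ℕ, iteratedFDeriv ℝ n f 0 = 0) :
    ∃ g : ℂ → ℂ, ContDiffAt ℝ (⊤ : ℕ∞) g 0 ∧ g 0 = 0 ∧
      (∀ n : ℕ, iteratedFDeriv ℝ n g 0 = 0) ∧
      ∀ᶠ z in 𝓝 0, f z = z * g z := by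
  have hflat : FlatAt f 0 := hflat
  refine ⟨divPow 1 f, hflat.contDiffAt_divPow hf 1, hflat.divPow_apply_zero 1, hflat.divPow hf 1,
    Eventually.of_forall fun z => ?_⟩
  rcases eq_or_ne z 0 with rfl | hz
  · rw [hflat.apply_eq_zero, zero_mul]
  · rw [divPow, pow_one, smul_eq_mul, mul_inv_cancel_left₀ hz]

/-- A smooth function `f : ℂ → ℂ` that is flat at `0` (all iterated real derivatives
at `0` vanish) is divisible by `z`: `f z = z·g z` near `0` for some smooth `g` which
is again flat at `0`. -/
theorem statement12 (f : ℂ → ℂ) (hf : ContDiffAt ℝ (⊤ : ℕ∞) f 0) (hf0 : f 0 = 0)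
    (hflat : ∀ n : ℕ, iteratedFDeriv ℝ n f 0 = 0) :
    ∃ g : ℂ → ℂ, ContDiffAt ℝ (⊤ : ℕ∞) g 0 ∧ g 0 = 0 ∧
      (∀ n : ℕ, iteratedFDeriv ℝ n g 0 = 0) ∧
      ∀ᶠ z in 𝓝 0, f z = z * g z :=
  statement12_general f hf hflat
end

section
/- Let μ ∈ ℂ with |μ| < 1. Let A : ℂ → ℂ be the real-linear map A(z) = z + μ·conj(z), let J₁ : ℂ → ℂ be the real-linear map J₁(z) = i·z, and let J₂ := A ∘ J₁ ∘ A⁻¹ (A is invertible since |μ| < 1). Then the trace of the real-linear endomorphism J₂ ∘ J₁⁻¹ of ℂ (regarded as a 2-dimensional real vector space) equals 2·(1 + |μ|²)/(1 − |μ|²). -/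
/-!
Every real-linear endomorphism of `ℂ` has the form `z ↦ a z + b conj z`, and its trace is
`2 Re a`, since `z ↦ b conj z` is traceless. Using `A⁻¹ w = (w - μ conj w) / (1 - |μ|²)`, a direct
computation gives `A J₁ A⁻¹ J₁⁻¹ w = ((1 + |μ|²) w + 2 μ conj w) / (1 - |μ|²)`.
-/

open Complex ComplexConjugate

namespace Complex

theorem trace_eq_two_mul_re_of_apply_eq (f : ℂ →ₗ[ℝ] ℂ) (a b : ℂ)
    (hf : ∀ z, f z = a * z + b * conj z) : LinearMap.trace ℝ ℂ f = 2 * a.re := by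
  rw [LinearMap.trace_eq_matrix_trace ℝ basisOneI, Matrix.trace_fin_two,
    LinearMap.toMatrix_apply, LinearMap.toMatrix_apply]
  simp only [coe_basisOneI, coe_basisOneI_repr, Matrix.cons_val_zero, Matrix.cons_val_one, hf,
    map_one, conj_I, add_re, add_im, mul_re, mul_im, I_re, I_im, one_re, one_im, neg_re, neg_im]
  ring

variable {μ : ℂ} {A : ℂ ≃ₗ[ℝ] ℂ}

theorem one_sub_sq_norm_ne_zero (hμ : ‖μ‖ ≠ 1) : (1 - ‖μ‖ ^ 2 : ℂ) ≠ 0 := by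
  have hsq : ‖μ‖ ^ 2 ≠ 1 := (pow_eq_one_iff_of_nonneg (norm_nonneg μ) two_ne_zero).not.2 hμ
  exact_mod_cast sub_ne_zero.2 hsq.symm

theorem symm_apply_of_apply_eq_add_mul_conj (hμ : ‖μ‖ ≠ 1) (hA : ∀ z, A z = z + μ * conj z)
    (w : ℂ) : A.symm w = (w - μ * conj w) / (1 - ‖μ‖ ^ 2) := by
  have hd := one_sub_sq_norm_ne_zero hμ
  rw [LinearEquiv.symm_apply_eq, hA]
  simp only [map_div₀, map_sub, map_mul, conj_conj, map_one, map_pow, conj_ofReal]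
  field_simp
  linear_combination w * mul_conj' μ

theorem commutator_apply_of_apply_eq_add_mul_conj (hμ : ‖μ‖ ≠ 1) (hA : ∀ z, A z = z + μ * conj z)
    {J : ℂ ≃ₗ[ℝ] ℂ} (hJ : ∀ z, J z = I * z) (w : ℂ) :
    ((A.toLinearMap ∘ₗ J.toLinearMap ∘ₗ A.symm.toLinearMap) ∘ₗ J.symm.toLinearMap) w =
      (1 + ‖μ‖ ^ 2) / (1 - ‖μ‖ ^ 2) * w + 2 * μ / (1 - ‖μ‖ ^ 2) * conj w := by
  have hd := one_sub_sq_norm_ne_zero hμ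
  have hJ_symm (z : ℂ) : J.symm z = -I * z := by
    rw [LinearEquiv.symm_apply_eq, hJ]
    linear_combination z * I_mul_I
  simp only [LinearMap.comp_apply, LinearEquiv.coe_coe, hJ_symm, hJ, hA,
    symm_apply_of_apply_eq_add_mul_conj hμ hA]
  simp only [map_div₀, map_sub, map_mul, conj_conj, map_neg, conj_I, conj_ofReal, map_one,
    map_pow]
  field_simp
  rw [I_sq]
  linear_combination w * mul_conj' μ

end Complex

/-- Relation between the `μ`-invariant of a double-pinched focus-focus singularity
and the induced pair of complex structures: if `A z = z + μ·conj z` (invertible for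
`|μ| < 1`), `J₁ z = i·z` is the standard complex structure on `ℂ ≅ ℝ²`, and
`J₂ = A ∘ J₁ ∘ A⁻¹`, then the trace of the real-linear endomorphism `J₂ ∘ J₁⁻¹`
equals `2·(1 + |μ|²)/(1 − |μ|²)`. -/
theorem statement13 (μ : ℂ) (hμ : ‖μ‖ < 1)
    (A J₁ : ℂ ≃ₗ[ℝ] ℂ)
    (hA : ∀ z, A z = z + μ * (starRingEnd ℂ) z)
    (hJ₁ : ∀ z, J₁ z = Complex.I * z)
    (J₂ : ℂ →ₗ[ℝ] ℂ)
    (hJ₂ : J₂ = A.toLinearMap ∘ₗ J₁.toLinearMap ∘ₗ A.symm.toLinearMap) :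
    LinearMap.trace ℝ ℂ (J₂ ∘ₗ J₁.symm.toLinearMap)
      = 2 * (1 + ‖μ‖ ^ 2) / (1 - ‖μ‖ ^ 2) := by
  subst hJ₂
  rw [trace_eq_two_mul_re_of_apply_eq _ _ _
    (commutator_apply_of_apply_eq_add_mul_conj hμ.ne hA hJ₁)]
  norm_cast
  ring
end

section
/- Let n ≥ 2 and let μ₁, …, μ_{n−1} ∈ ℂ be nonzero. Let c₀, c₁, …, c_{n−1} be nonzero complex numbers such that for every i ∈ {1, …, n−1} and every z ∈ ℂ: cᵢ·z + μᵢ·conj(cᵢ·z) = c₀·(z + μᵢ·conj(z)). Then cᵢ = c₀ for all i, and c₀ is a real number. -/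
/-!
Evaluating at `z = 1` and `z = I` shows that `z` and `conj z` are linearly independent over `ℂ`,
so the identity `cᵢ z + μᵢ conj cᵢ · conj z = c₀ z + c₀ μᵢ · conj z` forces `cᵢ = c₀` and
`μᵢ conj c₀ = c₀ μᵢ`; since `μᵢ ≠ 0`, `c₀` equals its conjugate.
-/

open ComplexConjugate

namespace Complex

theorem eq_and_eq_of_forall_mul_add_mul_conj {p q p' q' : ℂ}
    (h : ∀ z : ℂ, p * z + q * conj z = p' * z + q' * conj z) : p = p' ∧ q = q' := by
  have h₁ := h 1
  have hI := h I
  simp only [map_one, mul_one, conj_I] at h₁ hI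
  have h₂ : p - q = p' - q' := mul_right_cancel₀ I_ne_zero (by linear_combination hI)
  exact ⟨by linear_combination (h₁ + h₂) / 2, by linear_combination (h₁ - h₂) / 2⟩

theorem eq_and_im_eq_zero_of_forall_mul_add_mul_conj_mul {a b μ : ℂ} (hμ : μ ≠ 0)
    (h : ∀ z : ℂ, a * z + μ * conj (a * z) = b * (z + μ * conj z)) : a = b ∧ b.im = 0 := by
  obtain ⟨hab, hconj⟩ : a = b ∧ μ * conj a = b * μ :=
    eq_and_eq_of_forall_mul_add_mul_conj fun z => by
      have hz := h z
      rw [map_mul] at hz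
      linear_combination hz
  subst hab
  refine ⟨rfl, conj_eq_iff_im.mp (mul_left_cancel₀ hμ ?_)⟩
  linear_combination hconj

end Complex

theorem statement16_general (n : ℕ) (hn : 2 ≤ n) (μ : ℕ → ℂ)
    (hμ : ∀ i, 1 ≤ i → i ≤ n - 1 → μ i ≠ 0)
    (c : ℕ → ℂ)
    (heq : ∀ i, 1 ≤ i → i ≤ n - 1 → ∀ z : ℂ,
      c i * z + μ i * (starRingEnd ℂ) (c i * z)
        = c 0 * (z + μ i * (starRingEnd ℂ) z)) :
    (∀ i, 1 ≤ i → i ≤ n - 1 → c i = c 0) ∧ (c 0).im = 0 := by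
  have key : ∀ i, 1 ≤ i → i ≤ n - 1 → c i = c 0 ∧ (c 0).im = 0 := fun i h1 hi =>
    Complex.eq_and_im_eq_zero_of_forall_mul_add_mul_conj_mul (hμ i h1 hi) (heq i h1 hi)
  exact ⟨fun i h1 hi => (key i h1 hi).1, (key 1 le_rfl (by omega)).2⟩

/-- The complex-linear stabilizer of the tuple of normal forms `z + μᵢ·conj z`
(with all `μᵢ ≠ 0`) under the left-right action of liftable `1`-jets `z ↦ cⱼ·z` is
one-dimensional: if `cᵢ·z + μᵢ·conj (cᵢ·z) = c₀·(z + μᵢ·conj z)` for all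
`i = 1, …, n−1` and all `z`, then all `cᵢ` equal `c₀` and `c₀` is real. -/
theorem statement16 (n : ℕ) (hn : 2 ≤ n) (μ : ℕ → ℂ)
    (hμ : ∀ i, 1 ≤ i → i ≤ n - 1 → μ i ≠ 0)
    (c : ℕ → ℂ) (hc : ∀ j, j ≤ n - 1 → c j ≠ 0)
    (heq : ∀ i, 1 ≤ i → i ≤ n - 1 → ∀ z : ℂ,
      c i * z + μ i * (starRingEnd ℂ) (c i * z)
        = c 0 * (z + μ i * (starRingEnd ℂ) z)) :
    (∀ i, 1 ≤ i → i ≤ n - 1 → c i = c 0) ∧ (c 0).im = 0 :=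
  statement16_general n hn μ hμ c heq
end

section
/- Let h : ℂ → ℂ be C^∞-smooth on a neighborhood of 0 with h(0) ≠ 0, and suppose the map ψ(z) := z·h(z) has invertible real Fréchet derivative at 0. Then there exists a function k : ℂ → ℂ, C^∞-smooth on a neighborhood of 0, with k(0) ≠ 0, such that ψ(w·k(w)) = w for all w in a neighborhood of 0; i.e., the local inverse of ψ is again of the form w ↦ w·k(w). -/
open Complex Filter Topology

/-!
Let `φ` be the local inverse of `ψ z = z * h z` given by the inverse function theorem, so
`φ 0 = 0` and `φ w * h (φ w) = w` near `0`. Since `h (φ w)` stays away from `0`, this says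
`φ w = w * k w` with `k w = (h (φ w))⁻¹`, which is smooth with `k 0 = (h 0)⁻¹ ≠ 0`.
-/

theorem ContDiffAt.exists_rightInverse_of_isUnit_fderiv {𝕂 : Type*} [RCLike 𝕂]
    {E : Type*} [NormedAddCommGroup E] [NormedSpace 𝕂 E] [CompleteSpace E]
    {f : E → E} {a : E} {n : WithTop ℕ∞} (hf : ContDiffAt 𝕂 n f a)
    (hD : IsUnit (fderiv 𝕂 f a)) (hn : n ≠ 0) :
    ∃ g : E → E, ContDiffAt 𝕂 n g (f a) ∧ g (f a) = a ∧ ∀ᶠ y in 𝓝 (f a), f (g y) = y := by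
  obtain ⟨u, hu⟩ := hD
  have hf' : HasFDerivAt f (ContinuousLinearEquiv.ofUnit u : E →L[𝕂] E) a := by
    change HasFDerivAt f (u : E →L[𝕂] E) a
    rw [hu]
    exact (hf.differentiableAt hn).hasFDerivAt
  exact ⟨hf.localInverse hf' hn, hf.to_localInverse hf' hn, hf.localInverse_apply_image hf' hn,
    (hf.hasStrictFDerivAt' hf' hn).eventually_right_inverse⟩

theorem exists_inverse_eq_mul_of_isUnit_fderiv_mul {𝕂 : Type*} [RCLike 𝕂]
    {𝔸 : Type*} [NormedField 𝔸] [NormedAlgebra 𝕂 𝔸] [CompleteSpace 𝔸]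
    {h : 𝔸 → 𝔸} {n : WithTop ℕ∞} (hh : ContDiffAt 𝕂 n h 0) (h0 : h 0 ≠ 0)
    (hD : IsUnit (fderiv 𝕂 (fun z => z * h z) 0)) (hn : n ≠ 0) :
    ∃ k : 𝔸 → 𝔸, ContDiffAt 𝕂 n k 0 ∧ k 0 ≠ 0 ∧
      ∀ᶠ w in 𝓝 0, w * k w * h (w * k w) = w := by
  obtain ⟨φ, hφ, hφ0, hφinv⟩ :=
    (contDiffAt_id.mul hh).exists_rightInverse_of_isUnit_fderiv hD hn
  simp only [id, zero_mul] at hφ hφ0 hφinv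
  have hhφ : ContDiffAt 𝕂 n (fun w => h (φ w)) 0 := (hφ0 ▸ hh).comp 0 hφ
  have hhφ0 : h (φ 0) ≠ 0 := by rwa [hφ0]
  refine ⟨fun w => (h (φ w))⁻¹, hhφ.inv hhφ0, inv_ne_zero hhφ0, ?_⟩
  filter_upwards [hφinv, hhφ.continuousAt.eventually_ne hhφ0] with w hw hne
  have hφw : w * (h (φ w))⁻¹ = φ w := (mul_inv_eq_iff_eq_mul₀ hne).mpr hw.symm
  rw [hφw, hw]

/-- The local inverse of an orientation-preserving liftable local diffeomorphism
germ `ψ z = z·h z` (with `h` smooth near `0`, `h 0 ≠ 0`, and `ψ` having invertible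
real Fréchet derivative at `0`) is again of the same form: there is `k`, smooth near
`0` with `k 0 ≠ 0`, such that `ψ (w·k w) = w` near `0`. -/
theorem statement17 (h : ℂ → ℂ) (hsm : ContDiffAt ℝ (⊤ : ℕ∞) h 0) (h0 : h 0 ≠ 0)
    (ψ : ℂ → ℂ) (hψ : ∀ z, ψ z = z * h z)
    (hD : IsUnit (fderiv ℝ ψ 0)) :
    ∃ k : ℂ → ℂ, ContDiffAt ℝ (⊤ : ℕ∞) k 0 ∧ k 0 ≠ 0 ∧
      ∀ᶠ w in 𝓝 0, ψ (w * k w) = w := by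
  obtain rfl : ψ = fun z => z * h z := funext hψ
  exact exists_inverse_eq_mul_of_isUnit_fderiv_mul hsm h0 hD (by simp)
end

section
/- Let k, m ≥ 2 be integers with k ≠ m, and define φ(z) := z + conj(z)^k and φ̃(z) := z + conj(z)^m. Then there do NOT exist functions ψ₁, ψ₂ : ℂ → ℂ, each C^∞-smooth on a neighborhood of 0 and of the form ψⱼ(z) = z·hⱼ(z) or ψⱼ(z) = conj(z)·hⱼ(z) with hⱼ smooth near 0 and hⱼ(0) ≠ 0, such that φ̃(ψ₂(z)) = ψ₁(φ(z)) for all z in a neighborhood of 0. -/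
open Complex Filter Topology

/-- A germ `ψ` of `(ℂ, 0)` is liftable (admits a lift through `(u,v) ↦ u·v`) iff it
is smooth near `0` and, near `0`, of the form `ψ z = z·h z` or `ψ z = conj z·h z`
with `h` smooth near `0` and `h 0 ≠ 0`. -/
def LiftableForm (ψ : ℂ → ℂ) : Prop :=
  ContDiffAt ℝ (⊤ : ℕ∞) ψ 0 ∧
  ∃ h : ℂ → ℂ, ContDiffAt ℝ (⊤ : ℕ∞) h 0 ∧ h 0 ≠ 0 ∧
    ((∀ᶠ z in 𝓝 0, ψ z = z * h z) ∨
     (∀ᶠ z in 𝓝 0, ψ z = (starRingEnd ℂ) z * h z))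

/-!
Write `ψⱼ z = σⱼ z * hⱼ z` with `σⱼ ∈ {id, conj}` and restrict the conjugacy
`φ̃ ∘ ψ₂ = ψ₁ ∘ φ` to the real lines `t ↦ t • v`. Both sides are then of the form
`t • A t + t ^ q • B t`, and we compare their Taylor coefficients at `t = 0`.
The first-order coefficients give `σ₂ v * h₂ 0 = σ₁ v * h₁ 0` for all `v`, so `σ₁ = σ₂ =: σ`.
At order `n = min k m`, the perturbation `t ^ k • conj v ^ k` inside `h₁` is still invisible,
and the remaining terms read `σ v * Q v + σ̄ v ^ n * K = 0`, where `Q` is a homogeneous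
polynomial of degree `n - 1` in `v, v̄` (the `(n-1)`-st derivatives of `hⱼ` along lines) and
`K ≠ 0` comes from exactly one of the terms `conj (ψ₂ z) ^ m`, `conj z ^ k`, since `k ≠ m`.
Averaging over `(2n+1)`-st roots of unity shows that such an identity forces `K = 0`.
-/

open scoped ContDiff ComplexConjugate

section RealCurves

variable {E F : Type*} [NormedAddCommGroup E] [NormedSpace ℝ E] [NormedAddCommGroup F]
  [NormedSpace ℝ F]

theorem iteratedDeriv_pow_smul_zero {f : ℝ → F} {n : ℕ} (hf : ContDiffAt ℝ n f 0) (q : ℕ) :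
    iteratedDeriv n (fun t => t ^ q • f t) 0 =
      if q ≤ n then n.descFactorial q • iteratedDeriv (n - q) f 0 else 0 := by
  have hpow : ContDiffAt ℝ n (fun t : ℝ => t ^ q) 0 := by fun_prop
  have hleibniz := iteratedDerivWithin_smul (Set.mem_univ 0) uniqueDiffOn_univ
    hpow.contDiffWithinAt hf.contDiffWithinAt
  simp only [iteratedDerivWithin_univ] at hleibniz
  rw [show (fun t => t ^ q • f t) = (fun t : ℝ => t ^ q) • f from rfl, hleibniz]
  simp only [iteratedDeriv_fun_pow_zero]
  split_ifs with hq
  · rw [Finset.sum_eq_single q]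
    · simp [Nat.descFactorial_eq_factorial_mul_choose, mul_comm, mul_smul, Nat.cast_smul_eq_nsmul]
    · intro i _ hi; simp [hi]
    · intro h; simp only [Finset.mem_range] at h; omega
  · refine Finset.sum_eq_zero fun i hi => ?_
    simp only [Finset.mem_range] at hi
    simp [show i ≠ q by omega]

theorem iteratedDeriv_smul_add_pow_smul_zero {f g : ℝ → F} {n m : ℕ} (hf : ContDiffAt ℝ n f 0)
    (hg : ContDiffAt ℝ n g 0) (hn : n ≠ 0) (hnm : n ≤ m) :
    iteratedDeriv n (fun t => t • f t + t ^ m • g t) 0 =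
      n • iteratedDeriv (n - 1) f 0 + if m = n then n.factorial • g 0 else 0 := by
  have hf' := iteratedDeriv_pow_smul_zero hf 1
  simp only [pow_one, Nat.descFactorial_one] at hf'
  rw [iteratedDeriv_fun_add (by fun_prop) (by fun_prop), hf', if_pos (by omega),
    iteratedDeriv_pow_smul_zero hg]
  by_cases hmn : m = n
  · subst hmn; simp [Nat.descFactorial_self]
  · simp [hmn, show ¬m ≤ n by omega]

theorem ContDiffAt.comp_smul_add_pow_smul {u : E → F} {n : WithTop ℕ∞} (hu : ContDiffAt ℝ n u 0)
    {k : ℕ} (hk : k ≠ 0) (v w : E) : ContDiffAt ℝ n (fun t : ℝ => u (t • v + t ^ k • w)) 0 :=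
  ContDiffAt.comp (g := u) 0 (by simpa [hk] using hu) (by fun_prop)

theorem deriv_comp_smul_add_pow_smul_eventuallyEq {u : E → F} (hu : ContDiffAt ℝ 1 u 0)
    {k : ℕ} (hk : k ≠ 0) (v w : E) :
    deriv (fun t : ℝ => u (t • v + t ^ k • w)) =ᶠ[𝓝 0] fun t =>
      fderiv ℝ u (t • v + t ^ k • w) v +
        t ^ (k - 1) • ((k : ℝ) • fderiv ℝ u (t • v + t ^ k • w) w) := by
  have hc : Tendsto (fun t : ℝ => t • v + t ^ k • w) (𝓝 0) (𝓝 0) := by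
    have hcont : Continuous (fun t : ℝ => t • v + t ^ k • w) := by fun_prop
    simpa [hk] using hcont.tendsto 0
  filter_upwards [hc.eventually (hu.eventually (by simp))] with t ht
  have hcurve : HasDerivAt (fun t : ℝ => t • v + t ^ k • w) (v + (k * t ^ (k - 1)) • w) t := by
    simpa using ((hasDerivAt_id t).smul_const v).fun_add ((hasDerivAt_pow k t).smul_const w)
  have hchain := ((ht.differentiableAt one_ne_zero).hasFDerivAt.comp_hasDerivAt t hcurve).deriv
  rw [Function.comp_def] at hchain
  rw [hchain, map_add, map_smul, mul_comm, mul_smul]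

theorem iteratedDeriv_comp_smul_add_pow_smul_zero_of_lt {u : E → F} (hu : ContDiffAt ℝ ∞ u 0)
    {k p : ℕ} (hpk : p < k) (v w w' : E) :
    iteratedDeriv p (fun t : ℝ => u (t • v + t ^ k • w)) 0 =
      iteratedDeriv p (fun t : ℝ => u (t • v + t ^ k • w')) 0 := by
  induction p generalizing u with
  | zero => simp [show k ≠ 0 by omega]
  | succ p ih =>
    have hu' : ∀ y, ContDiffAt ℝ ∞ (fun x => fderiv ℝ u x y) 0 := fun y =>
      (hu.fderiv_right le_rfl).clm_apply contDiffAt_const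
    have hcomp : ∀ y w, ContDiffAt ℝ p (fun t : ℝ => fderiv ℝ u (t • v + t ^ k • w) y) 0 :=
      fun y w => ((hu' y).of_le (mod_cast le_top)).comp_smul_add_pow_smul (by omega) v w
    have hderiv : ∀ w, iteratedDeriv (p + 1) (fun t : ℝ => u (t • v + t ^ k • w)) 0 =
        iteratedDeriv p (fun t : ℝ => fderiv ℝ u (t • v + t ^ k • w) v) 0 := by
      intro w
      rw [iteratedDeriv_succ', ((deriv_comp_smul_add_pow_smul_eventuallyEq
        (hu.of_le (mod_cast le_top)) (by omega) v w).iteratedDeriv_eq p),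
        iteratedDeriv_fun_add (hcomp v w) (by fun_prop),
        iteratedDeriv_pow_smul_zero (by fun_prop), if_neg (by omega), add_zero]
    rw [hderiv, hderiv, ih (hu' v) (by omega)]

theorem iteratedDeriv_comp_smul_zero_eq_iteratedFDeriv {f : E → F} {n : ℕ}
    (hf : ContDiffAt ℝ n f 0) (v : E) :
    iteratedDeriv n (fun t : ℝ => f (t • v)) 0 = iteratedFDeriv ℝ n f 0 (fun _ => v) := by
  obtain ⟨U, hU, hfU⟩ := hf.contDiffOn le_rfl (by simp)
  obtain ⟨V, hVU, hV, hV0⟩ := mem_nhds_iff.mp hU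
  let g : ℝ →L[ℝ] E := ContinuousLinearMap.toSpanSingleton ℝ v
  have hg0 : g 0 = 0 := map_zero g
  have hgV : IsOpen (g ⁻¹' V) := hV.preimage g.continuous
  have hchain := g.iteratedFDerivWithin_comp_right (hfU.mono hVU) hV.uniqueDiffOn
    hgV.uniqueDiffOn (x := 0) (by rwa [hg0]) le_rfl
  rw [iteratedFDerivWithin_of_isOpen n hgV (by simpa [hg0] using hV0),
    iteratedFDerivWithin_of_isOpen n hV (by simpa [hg0] using hV0), hg0] at hchain
  rw [iteratedDeriv_eq_iteratedFDeriv]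
  change iteratedFDeriv ℝ n (f ∘ g) 0 (fun _ => 1) = _
  rw [hchain]
  simp [g]

end RealCurves

def IsZZbarHomogeneous (p : ℕ) (P : ℂ → ℂ) : Prop :=
  ∃ c : ℕ → ℂ, ∀ v, P v = ∑ a ∈ Finset.range (p + 1), c a * v ^ a * conj v ^ (p - a)

namespace IsZZbarHomogeneous

variable {p : ℕ} {P Q : ℂ → ℂ}

theorem add (hP : IsZZbarHomogeneous p P) (hQ : IsZZbarHomogeneous p Q) :
    IsZZbarHomogeneous p (fun v => P v + Q v) := by
  obtain ⟨c, hc⟩ := hP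
  obtain ⟨d, hd⟩ := hQ
  exact ⟨c + d, fun v => by simp only [hc, hd, ← Finset.sum_add_distrib, Pi.add_apply, add_mul]⟩

theorem const_mul (hP : IsZZbarHomogeneous p P) (z : ℂ) :
    IsZZbarHomogeneous p (fun v => z * P v) := by
  obtain ⟨c, hc⟩ := hP
  exact ⟨fun a => z * c a, fun v => by simp only [hc, Finset.mul_sum, mul_assoc]⟩

theorem id_mul (hP : IsZZbarHomogeneous p P) : IsZZbarHomogeneous (p + 1) (fun v => v * P v) := by
  obtain ⟨c, hc⟩ := hP
  refine ⟨fun a => if a = 0 then 0 else c (a - 1), fun v => ?_⟩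
  dsimp only
  rw [hc, Finset.mul_sum, Finset.sum_range_succ' _ (p + 1)]
  simp only [if_pos, Nat.add_one_ne_zero, if_false, Nat.add_sub_cancel, Nat.add_sub_add_right,
    zero_mul, add_zero]
  exact Finset.sum_congr rfl fun a _ => by ring

theorem conj_mul (hP : IsZZbarHomogeneous p P) :
    IsZZbarHomogeneous (p + 1) (fun v => conj v * P v) := by
  obtain ⟨c, hc⟩ := hP
  refine ⟨fun a => if a = p + 1 then 0 else c a, fun v => ?_⟩
  dsimp only
  rw [hc, Finset.mul_sum, Finset.sum_range_succ _ (p + 1)]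
  simp only [if_true, zero_mul, add_zero]
  refine Finset.sum_congr rfl fun a ha => ?_
  rw [Finset.mem_range] at ha
  rw [if_neg (by omega), show p + 1 - a = p - a + 1 by omega, pow_succ]
  ring

theorem re_mul (hP : IsZZbarHomogeneous p P) :
    IsZZbarHomogeneous (p + 1) (fun v => (v.re : ℂ) * P v) := by
  have hre : (fun v : ℂ => (v.re : ℂ) * P v) = fun v => 2⁻¹ * (v * P v + conj v * P v) := by
    funext v; rw [re_eq_add_conj]; ring
  rw [hre]
  exact (hP.id_mul.add hP.conj_mul).const_mul 2⁻¹

theorem im_mul (hP : IsZZbarHomogeneous p P) :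
    IsZZbarHomogeneous (p + 1) (fun v => (v.im : ℂ) * P v) := by
  have him : (fun v : ℂ => (v.im : ℂ) * P v) =
      fun v => (2 * I)⁻¹ * (v * P v + (-1) * (conj v * P v)) := by
    funext v; rw [im_eq_sub_conj]; ring
  rw [him]
  exact (hP.id_mul.add (hP.conj_mul.const_mul (-1))).const_mul (2 * I)⁻¹

theorem comp_conj (hP : IsZZbarHomogeneous p P) : IsZZbarHomogeneous p (fun v => P (conj v)) := by
  obtain ⟨c, hc⟩ := hP
  refine ⟨fun a => c (p - a), fun v => ?_⟩
  dsimp only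
  rw [hc, ← Finset.sum_range_reflect]
  refine Finset.sum_congr rfl fun a ha => ?_
  rw [Finset.mem_range] at ha
  rw [conj_conj, show p + 1 - 1 - a = p - a by omega, show p - (p - a) = a by omega]
  ring

end IsZZbarHomogeneous

theorem isZZbarHomogeneous_apply_diag {p : ℕ}
    (M : ContinuousMultilinearMap ℝ (fun _ : Fin p => ℂ) ℂ) :
    IsZZbarHomogeneous p (fun v => M (fun _ => v)) := by
  induction p with
  | zero => exact ⟨fun _ => M ![], fun v => by simp [Subsingleton.elim (fun _ => v) ![]]⟩
  | succ p ih =>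
    have hsplit : ∀ v : ℂ, M (fun _ => v) =
        (v.re : ℂ) * M.curryLeft 1 (fun _ => v) + (v.im : ℂ) * M.curryLeft I (fun _ => v) := by
      intro v
      have hv : v = v.re • (1 : ℂ) + v.im • I := by simp [real_smul, re_add_im]
      have hcons : (Fin.cons v fun _ => v : Fin (p + 1) → ℂ) = fun _ => v := by
        funext i; exact Fin.cases rfl (fun _ => rfl) i
      calc M (fun _ => v) = M.curryLeft v (fun _ => v) := by rw [M.curryLeft_apply, hcons]
        _ = M.curryLeft (v.re • (1 : ℂ) + v.im • I) (fun _ => v) := by rw [← hv]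
        _ = _ := by rw [map_add, map_smul, map_smul]; rfl
    simp only [hsplit]
    exact (ih _).re_mul.add (ih _).im_mul

theorem isZZbarHomogeneous_iteratedDeriv_comp_smul {h : ℂ → ℂ} {p : ℕ}
    (hh : ContDiffAt ℝ p h 0) :
    IsZZbarHomogeneous p fun v => iteratedDeriv p (fun t : ℝ => h (t • v)) 0 := by
  simp only [iteratedDeriv_comp_smul_zero_eq_iteratedFDeriv hh]
  exact isZZbarHomogeneous_apply_diag _

theorem IsPrimitiveRoot.sum_pow_pow_eq_zero {K : Type*} [Field K] {ζ : K} {N e : ℕ}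
    (hζ : IsPrimitiveRoot ζ N) (he : e ≠ 0) (heN : e < N) :
    ∑ j ∈ Finset.range N, (ζ ^ j) ^ e = 0 := by
  simp_rw [← pow_mul, mul_comm _ e, pow_mul]
  rw [geom_sum_eq (hζ.pow_ne_one_of_pos_of_lt he heN), ← pow_mul, mul_comm, pow_mul,
    hζ.pow_eq_one, one_pow, sub_self, zero_div]

theorem eq_zero_of_forall_mul_add_conj_pow_mul {p : ℕ} {Q : ℂ → ℂ} (hQ : IsZZbarHomogeneous p Q)
    {K : ℂ} (h : ∀ v, v * Q v + conj v ^ (p + 1) * K = 0) : K = 0 := by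
  obtain ⟨c, hc⟩ := hQ
  -- On the unit circle `conj v = v⁻¹`, so after multiplying by `v ^ (p + 1)` every monomial of
  -- `v * Q v` becomes a power `v ^ (2a + 2)` with `0 < 2a + 2 < 2p + 3`. These average to zero
  -- over the `(2p + 3)`-th roots of unity, and only `K` survives.
  have hcircle : ∀ v : ℂ, v * conj v = 1 →
      v ^ (p + 1) * (v * Q v + conj v ^ (p + 1) * K) =
        ∑ a ∈ Finset.range (p + 1), c a * v ^ (2 * a + 2) + K := by
    intro v hv
    rw [hc, mul_add, Finset.mul_sum, Finset.mul_sum, ← mul_assoc, ← mul_pow, hv, one_pow, one_mul]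
    refine congrArg (· + K) (Finset.sum_congr rfl fun a ha => ?_)
    rw [Finset.mem_range] at ha
    calc v ^ (p + 1) * (v * (c a * v ^ a * conj v ^ (p - a)))
        = c a * v ^ (2 * a + 2) * (v * conj v) ^ (p - a) := by
          rw [show p + 1 = (a + 1) + (p - a) by omega]; ring
      _ = c a * v ^ (2 * a + 2) := by rw [hv, one_pow, mul_one]
  set N := 2 * p + 3
  obtain ⟨ζ, hζ⟩ : ∃ ζ : ℂ, IsPrimitiveRoot ζ N := ⟨_, isPrimitiveRoot_exp N (by omega)⟩
  have hunit : ∀ j : ℕ, ζ ^ j * conj (ζ ^ j) = 1 := fun j => by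
    rw [mul_conj, normSq_eq_norm_sq, norm_pow, hζ.norm'_eq_one (by omega)]; simp
  have hsum : ∑ j ∈ Finset.range N,
      (∑ a ∈ Finset.range (p + 1), c a * (ζ ^ j) ^ (2 * a + 2) + K) = 0 :=
    Finset.sum_eq_zero fun j _ => by rw [← hcircle _ (hunit j), h, mul_zero]
  rw [Finset.sum_add_distrib, Finset.sum_comm, Finset.sum_eq_zero fun a ha => by
    rw [← Finset.mul_sum, hζ.sum_pow_pow_eq_zero (by omega)
      (by have := Finset.mem_range.mp ha; omega), mul_zero]]
    at hsum
  simpa [N, ← Nat.cast_ofNat, ← Nat.cast_mul, ← Nat.cast_add, -Nat.cast_ofNat] using hsum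

noncomputable def idOrConj (b : Bool) : ℂ →ₐ[ℝ] ℂ := if b then conjAe.toAlgHom else AlgHom.id ℝ ℂ

@[simp] theorem idOrConj_false (z : ℂ) : idOrConj false z = z := rfl

@[simp] theorem idOrConj_true (z : ℂ) : idOrConj true z = conj z := rfl

@[simp] theorem conj_idOrConj (b : Bool) (z : ℂ) : conj (idOrConj b z) = idOrConj (!b) z := by
  cases b <;> simp

@[simp] theorem idOrConj_conj (b : Bool) (z : ℂ) : idOrConj b (conj z) = idOrConj (!b) z := by
  cases b <;> simp

def addConjPow (k : ℕ) (z : ℂ) : ℂ := z + conj z ^ k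

theorem addConjPow_smul (k : ℕ) (t : ℝ) (v : ℂ) :
    addConjPow k (t • v) = t • v + t ^ k • conj v ^ k := by
  rw [addConjPow, RCLike.conj_smul, smul_pow]

theorem iteratedDeriv_addConjPow_idOrConj_mul_smul {h : ℂ → ℂ} (hh : ContDiffAt ℝ ∞ h 0)
    (b : Bool) {m n : ℕ} (hn : n ≠ 0) (hnm : n ≤ m) (v : ℂ) :
    iteratedDeriv n (fun t : ℝ => addConjPow m (idOrConj b (t • v) * h (t • v))) 0 =
      n * (idOrConj b v * iteratedDeriv (n - 1) (fun t : ℝ => h (t • v)) 0) +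
        idOrConj (!b) v ^ n * (if m = n then n.factorial * conj (h 0) ^ n else 0) := by
  have hline : ContDiffAt ℝ n (fun t : ℝ => h (t • v)) 0 := by
    simpa using (hh.of_le (mod_cast le_top)).comp_smul_add_pow_smul one_ne_zero v 0
  have hexpand : (fun t : ℝ => addConjPow m (idOrConj b (t • v) * h (t • v))) = fun t =>
      t • (idOrConj b v * h (t • v)) + t ^ m • (idOrConj (!b) v ^ m * conj (h (t • v)) ^ m) := by
    funext t
    simp only [addConjPow, AlgHom.map_smul_of_tower, smul_mul_assoc, map_mul, RCLike.conj_smul,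
      conj_idOrConj, smul_pow, mul_pow]
  have hconj : ContDiffAt ℝ n (fun t : ℝ => conj (h (t • v))) 0 :=
    conjCLE.contDiff.contDiffAt.comp 0 hline
  rw [hexpand, iteratedDeriv_smul_add_pow_smul_zero (contDiffAt_const.mul hline) (by fun_prop)
    hn hnm, iteratedDeriv_const_mul_field]
  split_ifs with hmn
  · subst hmn; simp [nsmul_eq_mul]; ring
  · simp [nsmul_eq_mul]

theorem iteratedDeriv_idOrConj_addConjPow_mul_smul {h : ℂ → ℂ} (hh : ContDiffAt ℝ ∞ h 0)
    (b : Bool) {k n : ℕ} (hn : n ≠ 0) (hnk : n ≤ k) (v : ℂ) :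
    iteratedDeriv n (fun t : ℝ => idOrConj b (addConjPow k (t • v)) * h (addConjPow k (t • v))) 0 =
      n * (idOrConj b v * iteratedDeriv (n - 1) (fun t : ℝ => h (t • v)) 0) +
        idOrConj (!b) v ^ n * (if k = n then n.factorial * h 0 else 0) := by
  have hk : k ≠ 0 := by omega
  have hcurve : ContDiffAt ℝ n (fun t : ℝ => h (t • v + t ^ k • conj v ^ k)) 0 :=
    (hh.of_le (mod_cast le_top)).comp_smul_add_pow_smul hk v _
  have hexpand : (fun t : ℝ => idOrConj b (addConjPow k (t • v)) * h (addConjPow k (t • v))) =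
      fun t => t • (idOrConj b v * h (t • v + t ^ k • conj v ^ k)) +
        t ^ k • (idOrConj (!b) v ^ k * h (t • v + t ^ k • conj v ^ k)) := by
    funext t
    simp only [addConjPow_smul, map_add, AlgHom.map_smul_of_tower, map_pow, idOrConj_conj,
      add_mul, smul_mul_assoc]
  have hlow : iteratedDeriv (n - 1) (fun t : ℝ => h (t • v + t ^ k • conj v ^ k)) 0 =
      iteratedDeriv (n - 1) (fun t : ℝ => h (t • v)) 0 := by
    simpa using iteratedDeriv_comp_smul_add_pow_smul_zero_of_lt hh (by omega : n - 1 < k) v _ 0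
  rw [hexpand, iteratedDeriv_smul_add_pow_smul_zero (contDiffAt_const.mul hcurve)
    (contDiffAt_const.mul hcurve) hn hnk, iteratedDeriv_const_mul_field, hlow]
  split_ifs with hkn
  · subst hkn; simp [nsmul_eq_mul, hk]; ring
  · simp [nsmul_eq_mul]

theorem eq_of_forall_idOrConj_mul_eq {b₁ b₂ : Bool} {c₁ c₂ : ℂ} (hc₁ : c₁ ≠ 0)
    (h : ∀ v, idOrConj b₂ v * c₂ = idOrConj b₁ v * c₁) : b₁ = b₂ := by
  have h1 := h 1
  have hI := h I
  cases b₁ <;> cases b₂ <;> simp only [idOrConj_false, idOrConj_true, map_one, one_mul,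
    conj_I] at h1 hI ⊢
  · subst h1
    exact (hc₁ (by linear_combination I / 2 * hI + c₂ * I_sq)).elim
  · subst h1
    exact (hc₁ (by linear_combination -I / 2 * hI + c₂ * I_sq)).elim

theorem eq_zero_of_forall_idOrConj_mul_add_pow_mul {p : ℕ} {Q : ℂ → ℂ}
    (hQ : IsZZbarHomogeneous p Q) (b : Bool) {K : ℂ}
    (h : ∀ v, idOrConj b v * Q v + idOrConj (!b) v ^ (p + 1) * K = 0) : K = 0 := by
  cases b
  · exact eq_zero_of_forall_mul_add_conj_pow_mul hQ (by simpa using h)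
  · exact eq_zero_of_forall_mul_add_conj_pow_mul hQ.comp_conj fun v => by simpa using h (conj v)

theorem LiftableForm.exists_idOrConj {ψ : ℂ → ℂ} (hψ : LiftableForm ψ) :
    ∃ (b : Bool) (h : ℂ → ℂ), ContDiffAt ℝ ∞ h 0 ∧ h 0 ≠ 0 ∧
      ∀ᶠ z in 𝓝 0, ψ z = idOrConj b z * h z := by
  obtain ⟨-, h, hh, h0, hψ | hψ⟩ := hψ
  · exact ⟨false, h, hh, h0, by simpa using hψ⟩
  · exact ⟨true, h, hh, h0, by simpa using hψ⟩

theorem tendsto_addConjPow_zero {k : ℕ} (hk : k ≠ 0) : Tendsto (addConjPow k) (𝓝 0) (𝓝 0) := by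
  have hcont : Continuous (addConjPow k) := continuous_id.add (continuous_conj.pow k)
  simpa [addConjPow, hk] using hcont.tendsto 0

theorem not_eventually_addConjPow_idOrConj_mul_eq {k m : ℕ} (hk : 2 ≤ k) (hm : 2 ≤ m)
    (hkm : k ≠ m) {h₁ h₂ : ℂ → ℂ} (hh₁ : ContDiffAt ℝ ∞ h₁ 0) (hh₂ : ContDiffAt ℝ ∞ h₂ 0)
    (h₁0 : h₁ 0 ≠ 0) (h₂0 : h₂ 0 ≠ 0) (b₁ b₂ : Bool) :
    ¬∀ᶠ z in 𝓝 0, addConjPow m (idOrConj b₂ z * h₂ z) =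
      idOrConj b₁ (addConjPow k z) * h₁ (addConjPow k z) := by
  intro heq
  have hline : ∀ n v,
      iteratedDeriv n (fun t : ℝ => addConjPow m (idOrConj b₂ (t • v) * h₂ (t • v))) 0 =
        iteratedDeriv n
          (fun t : ℝ => idOrConj b₁ (addConjPow k (t • v)) * h₁ (addConjPow k (t • v))) 0 := by
    intro n v
    have hray : Tendsto (fun t : ℝ => t • v) (𝓝 0) (𝓝 0) :=
      Continuous.tendsto' (by fun_prop) 0 0 (zero_smul ℝ v)
    exact Filter.EventuallyEq.iteratedDeriv_eq n (hray.eventually heq)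
  have hfirst : ∀ v, idOrConj b₂ v * h₂ 0 = idOrConj b₁ v * h₁ 0 := fun v => by
    have hcoeff := hline 1 v
    rw [iteratedDeriv_addConjPow_idOrConj_mul_smul hh₂ b₂ one_ne_zero (by omega),
      iteratedDeriv_idOrConj_addConjPow_mul_smul hh₁ b₁ one_ne_zero (by omega)] at hcoeff
    simpa [show m ≠ 1 by omega, show k ≠ 1 by omega] using hcoeff
  obtain rfl := eq_of_forall_idOrConj_mul_eq h₁0 hfirst
  obtain ⟨p, hp⟩ : ∃ p, min k m = p + 1 := ⟨min k m - 1, by omega⟩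
  set D : (ℂ → ℂ) → ℂ → ℂ := fun h v => iteratedDeriv p (fun t : ℝ => h (t • v)) 0
  have hQ : IsZZbarHomogeneous p fun v => (p + 1 : ℂ) * (D h₂ v + -1 * D h₁ v) :=
    ((isZZbarHomogeneous_iteratedDeriv_comp_smul (hh₂.of_le (mod_cast le_top))).add
      ((isZZbarHomogeneous_iteratedDeriv_comp_smul (hh₁.of_le (mod_cast le_top))).const_mul
        (-1))).const_mul _
  set K : ℂ := (if m = p + 1 then (p + 1).factorial * conj (h₂ 0) ^ (p + 1) else 0) -
    (if k = p + 1 then (p + 1).factorial * h₁ 0 else 0)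
  have hK : K ≠ 0 := by
    rcases hkm.lt_or_gt with hlt | hlt
    · simp [K, ← hp, min_eq_left hlt.le, hlt.ne', Nat.factorial_ne_zero, h₁0]
    · simp [K, ← hp, min_eq_right hlt.le, hkm, Nat.factorial_ne_zero, h₂0]
  refine hK (eq_zero_of_forall_idOrConj_mul_add_pow_mul hQ b₁ fun v => ?_)
  have hcoeff := hline (p + 1) v
  rw [iteratedDeriv_addConjPow_idOrConj_mul_smul hh₂ b₁ (by omega) (by omega),
    iteratedDeriv_idOrConj_addConjPow_mul_smul hh₁ b₁ (by omega) (by omega)] at hcoeff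
  push_cast at hcoeff
  linear_combination hcoeff

/-- The germs `φ z = z + conj z ^ k` for different `k ≥ 2` lie in different orbits
of the left-right action by liftable germs: there are no liftable `ψ₁, ψ₂` with
`φ̃ ∘ ψ₂ = ψ₁ ∘ φ` near `0`, where `φ̃ z = z + conj z ^ m` and `k ≠ m`. -/
theorem statement18 (k m : ℕ) (hk : 2 ≤ k) (hm : 2 ≤ m) (hkm : k ≠ m)
    (φ φt : ℂ → ℂ)
    (hφ : ∀ z, φ z = z + (starRingEnd ℂ) z ^ k)
    (hφt : ∀ z, φt z = z + (starRingEnd ℂ) z ^ m) :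
    ¬∃ ψ₁ ψ₂ : ℂ → ℂ, LiftableForm ψ₁ ∧ LiftableForm ψ₂ ∧
      ∀ᶠ z in 𝓝 0, φt (ψ₂ z) = ψ₁ (φ z) := by
  obtain rfl : φ = addConjPow k := funext hφ
  obtain rfl : φt = addConjPow m := funext hφt
  rintro ⟨ψ₁, ψ₂, hψ₁, hψ₂, hconj⟩
  obtain ⟨b₁, h₁, hh₁, h₁0, hψ₁h₁⟩ := hψ₁.exists_idOrConj
  obtain ⟨b₂, h₂, hh₂, h₂0, hψ₂h₂⟩ := hψ₂.exists_idOrConj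
  refine not_eventually_addConjPow_idOrConj_mul_eq hk hm hkm hh₁ hh₂ h₁0 h₂0 b₁ b₂ ?_
  filter_upwards [hconj, hψ₂h₂, (tendsto_addConjPow_zero (k := k) (by omega)).eventually hψ₁h₁]
    with z hz h₂z h₁z
  rwa [h₂z, h₁z] at hz
end
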